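/- arXiv:2306.12145 — 8 statements merged into one kernel-verified Lean document; each statement's English description precedes it below -/
import Mathlib

section
/- If u : ℝ → ℝ is of class C², u' is bounded on ℝ, and a(x)u''(x) + H(x,u'(x)) = λ holds for all x with a(x) ≥ 0 and a bounded, then λ ≥ inf H. More precisely, since u' is C¹ and bounded, inf_{x∈ℝ} |u''(x)| = 0, hence λ ≥ inf_{(x,p)} H(x,p). -/
/-!
If `|u''| ≥ c > 0` everywhere, then by Darboux's theorem `u''` has a constant sign, so `u'`
grows at least linearly in one direction and cannot be bounded; hence `inf |u''| = 0`.
At points where `|u''|` is small, the equation gives `H(x, u'(x)) = λ - a(x) u''(x) ≤ λ + |u''(x)|`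
because `0 ≤ a ≤ 1`, so `inf H ≤ λ`.
-/

open Set

theorem not_bddAbove_range_of_le_deriv {f : ℝ → ℝ} (hf : Differentiable ℝ f) {c : ℝ}
    (hc : 0 < c) (hf' : ∀ x, c ≤ deriv f x) : ¬BddAbove (range f) := by
  rintro ⟨M, hM⟩
  have hf0 : f 0 ≤ M := hM ⟨0, rfl⟩
  set y := (M - f 0) / c + 1
  have hy : 0 ≤ y := by positivity
  have hcy : c * y = M - f 0 + c := by rw [mul_add, mul_div_cancel₀ _ hc.ne', mul_one]
  have hgrowth : c * (y - 0) ≤ f y - f 0 := mul_sub_le_image_sub_of_le_deriv hf hf' hy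
  linarith [hM ⟨y, rfl⟩]

theorem iInf_abs_deriv_eq_zero_of_abs_le {f : ℝ → ℝ} (hf : Differentiable ℝ f) {C : ℝ}
    (hC : ∀ x, |f x| ≤ C) : ⨅ x, |deriv f x| = 0 := by
  have hbdd : BddBelow (range fun x => |deriv f x|) := ⟨0, by rintro _ ⟨x, rfl⟩; positivity⟩
  refine le_antisymm (not_lt.1 fun hpos => ?_) (le_ciInf fun x => abs_nonneg _)
  set c := ⨅ x, |deriv f x|
  have hc : ∀ x, c ≤ |deriv f x| := ciInf_le hbdd
  have hne : ∀ x ∈ univ, deriv f x ≠ 0 := fun x _ h => by linarith [hc x, abs_eq_zero.2 h]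
  rcases hasDerivWithinAt_forall_lt_or_forall_gt_of_forall_ne convex_univ
      (fun x _ => (hf x).hasDerivAt.hasDerivWithinAt) hne with hlt | hgt
  · refine not_bddAbove_range_of_le_deriv hf.neg hpos (fun x => ?_) ⟨C, ?_⟩
    · simpa [deriv.neg', abs_of_neg (hlt x trivial)] using hc x
    · rintro _ ⟨x, rfl⟩
      exact (neg_le_abs _).trans (hC x)
  · refine not_bddAbove_range_of_le_deriv hf hpos (fun x => ?_) ⟨C, ?_⟩
    · simpa [abs_of_pos (hgt x trivial)] using hc x
    · rintro _ ⟨x, rfl⟩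
      exact (le_abs_self _).trans (hC x)

theorem level_ge_inf_of_corrector_general
    (a : ℝ → ℝ) (H : ℝ → ℝ → ℝ) (u : ℝ → ℝ) (lam : ℝ)
    (ha : ∀ x, 0 ≤ a x ∧ a x ≤ 1)
    (hH_bdd : BddBelow (Set.range fun q : ℝ × ℝ => H q.1 q.2))
    (hu : ContDiff ℝ 2 u)
    (hu' : ∃ C : ℝ, ∀ x, |deriv u x| ≤ C)
    (heq : ∀ x, a x * deriv (deriv u) x + H x (deriv u x) = lam) :
    (⨅ x : ℝ, |deriv (deriv u) x|) = 0 ∧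
      sInf (Set.range fun q : ℝ × ℝ => H q.1 q.2) ≤ lam := by
  obtain ⟨C, hC⟩ := hu'
  have hinf := iInf_abs_deriv_eq_zero_of_abs_le hu.differentiable_deriv_two hC
  refine ⟨hinf, le_of_forall_pos_le_add fun ε hε => ?_⟩
  obtain ⟨x, hx⟩ := exists_lt_of_ciInf_lt (hinf.symm ▸ hε)
  have hax : |a x * deriv (deriv u) x| ≤ |deriv (deriv u) x| := by
    rw [abs_mul]
    exact mul_le_of_le_one_left (abs_nonneg _) (abs_le.2 ⟨by linarith [(ha x).1], (ha x).2⟩)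
  calc sInf (Set.range fun q : ℝ × ℝ => H q.1 q.2) ≤ H x (deriv u x) :=
        csInf_le hH_bdd ⟨(x, deriv u x), rfl⟩
    _ = lam - a x * deriv (deriv u) x := by linarith [heq x]
    _ ≤ lam + ε := by linarith [neg_abs_le (a x * deriv (deriv u) x)]

/-- If `u` is `C²` with bounded derivative and `a x * u'' + H(x, u') = λ` with
`0 ≤ a ≤ 1`, then `inf |u''| = 0` and `λ ≥ inf H`. -/
theorem level_ge_inf_of_corrector
    (a : ℝ → ℝ) (H : ℝ → ℝ → ℝ) (u : ℝ → ℝ) (lam : ℝ)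
    (ha_cont : Continuous a) (ha : ∀ x, 0 ≤ a x ∧ a x ≤ 1)
    (hH_cont : Continuous fun q : ℝ × ℝ => H q.1 q.2)
    (hH_bdd : BddBelow (Set.range fun q : ℝ × ℝ => H q.1 q.2))
    (hu : ContDiff ℝ 2 u)
    (hu' : ∃ C : ℝ, ∀ x, |deriv u x| ≤ C)
    (heq : ∀ x, a x * deriv (deriv u) x + H x (deriv u x) = lam) :
    (⨅ x : ℝ, |deriv (deriv u) x|) = 0 ∧
      sInf (Set.range fun q : ℝ × ℝ => H q.1 q.2) ≤ lam :=
  level_ge_inf_of_corrector_general a H u lam ha hH_bdd hu hu' heq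
end

section
/- Let g : ℝ → ℝ be bounded and Lipschitz on a bounded open interval J, and set gₙ := ρₙ * g where ρₙ are standard even mollifiers supported in (−1/n, 1/n). If g is a classical solution of a(x)g' + H(x,g) = μ on J, a is Lipschitz, and H is Lipschitz in x and in p on compact sets, then for every ε > 0 and every compact subinterval J' ⊂ J there exists N such that for all n ≥ N and all x ∈ J': a(x)gₙ'(x) + H(x,gₙ(x)) > μ − ε. -/
open MeasureTheory Filter Topology

lemma aux_abs_deriv_le {g : ℝ → ℝ} {s : Set ℝ} (hs : IsOpen s) {K : ℝ}
    (hlip : ∀ x ∈ s, ∀ y ∈ s, |g x - g y| ≤ K * |x - y|)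
    {z : ℝ} (hz : z ∈ s) (hd : DifferentiableAt ℝ g z) : |deriv g z| ≤ K := by
  have h1 := hasDerivAt_iff_tendsto_slope.1 hd.hasDerivAt
  have h2 : Tendsto (fun y => |slope g z y|) (𝓝[≠] z) (𝓝 |deriv g z|) :=
    (continuous_abs.tendsto _).comp h1
  refine le_of_tendsto h2 ?_
  have hev : ∀ᶠ y in 𝓝[≠] z, y ∈ s :=
    eventually_nhdsWithin_of_eventually_nhds (hs.eventually_mem hz)
  filter_upwards [hev, self_mem_nhdsWithin] with y hy hyz
  have hyz' : (y : ℝ) ≠ z := hyz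
  have hpos : 0 < |y - z| := abs_pos.2 (sub_ne_zero.2 hyz')
  have heq : |slope g z y| = |g y - g z| / |y - z| := by
    rw [slope_def_field, abs_div]
  rw [heq, div_le_iff₀ hpos]
  exact hlip y hy z hz

set_option maxHeartbeats 1600000 in
/-- Mollification of a classical ODE solution: if `g` solves
`a g' + H(x,g) = μ` on the bounded open interval `(A,B)`, `a` is Lipschitz and
`H` Lipschitz in `x` and (locally) in `p`, and `gₙ := ρₙ * g` with standard even
mollifiers `ρₙ` supported in `(-1/(n+1), 1/(n+1))`, then for every `ε > 0` and
every compact subinterval `[c,d] ⊂ (A,B)` there is `N` such that for `n ≥ N`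
and `x ∈ [c,d]` one has `a x gₙ'(x) + H(x, gₙ(x)) > μ - ε`. -/
theorem mollified_strict_supersolution
    (a : ℝ → ℝ) (H : ℝ → ℝ → ℝ) (g : ℝ → ℝ) (ρ : ℕ → ℝ → ℝ)
    (mu γ C A B : ℝ) (hAB : A < B) (hγ : 1 < γ)
    (ha_lip : ∃ L : ℝ, ∀ x y, |a x - a y| ≤ L * |x - y|)
    (ha01 : ∀ x, 0 ≤ a x ∧ a x ≤ 1)
    (hH_cont : Continuous fun q : ℝ × ℝ => H q.1 q.2)
    (hHx : ∀ x y p, |H x p - H y p| ≤ C * (|p| ^ γ + 1) * |x - y|)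
    (hHp : ∀ R > (0:ℝ), ∃ CR : ℝ, ∀ x p q, |p| ≤ R → |q| ≤ R →
      |H x p - H x q| ≤ CR * |p - q|)
    (hg_cont : Continuous g) (hg_bdd : ∃ M : ℝ, ∀ x, |g x| ≤ M)
    (hg_lip : ∃ K : ℝ, ∀ x ∈ Set.Ioo A B, ∀ y ∈ Set.Ioo A B,
      |g x - g y| ≤ K * |x - y|)
    (hg_sol : ∀ x ∈ Set.Ioo A B,
      DifferentiableAt ℝ g x ∧ a x * deriv g x + H x (g x) = mu)
    (hρ : ∀ n : ℕ, ContDiff ℝ (⊤ : ℕ∞) (ρ n) ∧ (∀ t, 0 ≤ ρ n t) ∧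
      (∀ t, ρ n (-t) = ρ n t) ∧
      Function.support (ρ n) ⊆ Set.Ioo (-(1/(n+1 : ℝ))) (1/(n+1 : ℝ)) ∧
      (∫ t, ρ n t) = 1) :
    ∀ ε > (0:ℝ), ∀ c d : ℝ, Set.Icc c d ⊆ Set.Ioo A B →
      ∃ N : ℕ, ∀ n ≥ N, ∀ x ∈ Set.Icc c d,
        a x * deriv (fun y => ∫ t, ρ n t * g (y - t)) x
          + H x (∫ t, ρ n t * g (x - t)) > mu - ε := by
  intro ε hε c d hcd
  by_cases hcd' : c ≤ d
  swap
  · exact ⟨0, fun n _ x hx => absurd (hx.1.trans hx.2) hcd'⟩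
  have hc : c ∈ Set.Ioo A B := hcd ⟨le_refl c, hcd'⟩
  have hd : d ∈ Set.Ioo A B := hcd ⟨hcd', le_refl d⟩
  obtain ⟨L, hL⟩ := ha_lip
  obtain ⟨M, hM⟩ := hg_bdd
  obtain ⟨K, hK⟩ := hg_lip
  set K' : ℝ := max K 0 with hK'def
  set L' : ℝ := max L 0 with hL'def
  have hK'0 : 0 ≤ K' := le_max_right _ _
  have hL'0 : 0 ≤ L' := le_max_right _ _
  have hM0 : 0 ≤ M := le_trans (abs_nonneg _) (hM 0)
  obtain ⟨CR, hCR⟩ := hHp (M + 1) (by linarith)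
  set CR' : ℝ := max CR 0 with hCR'def
  have hCR'0 : 0 ≤ CR' := le_max_right _ _
  set Cb : ℝ := max C 0 with hCbdef
  have hCb0 : 0 ≤ Cb := le_max_right _ _
  have hγ0 : (0:ℝ) ≤ γ := by linarith
  have hMγ0 : (0:ℝ) ≤ M ^ γ := Real.rpow_nonneg hM0 γ
  set E : ℝ := L' * K' + 2 * CR' * K' + Cb * (M ^ γ + 1) with hEdef
  have hE0 : 0 ≤ E := by positivity
  set δ₀ : ℝ := min (c - A) (B - d) with hδ₀def
  have hδ₀pos : 0 < δ₀ := lt_min (by linarith [hc.1]) (by linarith [hd.2])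
  have hδ₀cA : δ₀ ≤ c - A := min_le_left _ _
  have hδ₀Bd : δ₀ ≤ B - d := min_le_right _ _
  set θ : ℝ := min (δ₀ / 4) (ε / (E + 1)) with hθdef
  have hθpos : 0 < θ := lt_min (by linarith) (by positivity)
  obtain ⟨N, hN⟩ := exists_nat_one_div_lt hθpos
  refine ⟨N, fun n hn x hx => ?_⟩
  set δ : ℝ := 1 / (n + 1 : ℝ) with hδdef
  have hδpos : 0 < δ := by positivity
  have hδθ : δ < θ := by
    have h1 : (N + 1 : ℝ) ≤ (n + 1 : ℝ) := by exact_mod_cast Nat.succ_le_succ hn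
    have : δ ≤ 1 / (N + 1 : ℝ) :=
      one_div_le_one_div_of_le (by positivity) h1
    linarith [hN]
  have hδδ₀ : δ < δ₀ / 4 := lt_of_lt_of_le hδθ (min_le_left _ _)
  have hδε : δ < ε / (E + 1) := lt_of_lt_of_le hδθ (min_le_right _ _)
  obtain ⟨hρsm, hρ0, hρeven, hρsupp, hρint1⟩ := hρ n
  have hρcont : Continuous (ρ n) := hρsm.continuous
  have hρcs : HasCompactSupport (ρ n) := by
    apply HasCompactSupport.intro (isCompact_Icc (a := -δ) (b := δ))
    intro t ht
    by_contra h
    have := hρsupp (Function.mem_support.2 h)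
    exact ht ⟨le_of_lt this.1, le_of_lt this.2⟩
  have hρint : Integrable (ρ n) := hρcont.integrable_of_hasCompactSupport hρcs
  have hsupp : ∀ t : ℝ, ρ n t ≠ 0 → |t| < δ := by
    intro t ht
    have := hρsupp (Function.mem_support.2 ht)
    exact abs_lt.2 ⟨by linarith [this.1], this.2⟩
  -- membership of translates in (A,B)
  have hmem : ∀ y ∈ Metric.ball x (δ₀ / 4), ∀ t : ℝ, |t| < δ → y - t ∈ Set.Ioo A B := by
    intro y hy t ht
    rw [Metric.mem_ball, Real.dist_eq] at hy
    obtain ⟨hy1, hy2⟩ := abs_lt.1 hy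
    obtain ⟨ht1, ht2⟩ := abs_lt.1 ht
    constructor
    · have := hx.1; nlinarith
    · have := hx.2; nlinarith
  have hxball : x ∈ Metric.ball x (δ₀ / 4) := Metric.mem_ball_self (by linarith)
  -- derivative bound
  have hg' : ∀ z ∈ Set.Ioo A B, |deriv g z| ≤ K' := by
    intro z hz
    refine aux_abs_deriv_le isOpen_Ioo ?_ hz (hg_sol z hz).1
    intro u hu v hv
    calc |g u - g v| ≤ K * |u - v| := hK u hu v hv
      _ ≤ K' * |u - v| := mul_le_mul_of_nonneg_right (le_max_left _ _) (abs_nonneg _)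
  -- measurability / integrability facts
  have hmeasF' : ∀ y : ℝ, AEStronglyMeasurable (fun t => ρ n t * deriv g (y - t)) volume := by
    intro y
    exact (hρcont.measurable.mul ((measurable_deriv g).comp
      (measurable_const.sub measurable_id))).aestronglyMeasurable
  have hFint : ∀ y : ℝ, Integrable (fun t => ρ n t * g (y - t)) := by
    intro y
    exact (hρcont.mul (hg_cont.comp (continuous_const.sub continuous_id))).integrable_of_hasCompactSupport
      (hρcs.mul_right)
  have hbound : ∀ t : ℝ, ∀ y ∈ Metric.ball x (δ₀ / 4),
      ‖ρ n t * deriv g (y - t)‖ ≤ ρ n t * K' := by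
    intro t y hy
    by_cases hz : ρ n t = 0
    · simp [hz]
    · have ht := hsupp t hz
      have hmem' := hmem y hy t ht
      rw [Real.norm_eq_abs, abs_mul, abs_of_nonneg (hρ0 t)]
      exact mul_le_mul_of_nonneg_left (hg' _ hmem') (hρ0 t)
  have hdiff : ∀ t : ℝ, ∀ y ∈ Metric.ball x (δ₀ / 4),
      HasDerivAt (fun y => ρ n t * g (y - t)) (ρ n t * deriv g (y - t)) y := by
    intro t y hy
    by_cases hz : ρ n t = 0
    · have : (fun y => ρ n t * g (y - t)) = fun _ => (0:ℝ) := by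
        funext u; rw [hz, zero_mul]
      rw [this, hz, zero_mul]
      exact hasDerivAt_const _ 0
    · have ht := hsupp t hz
      have hmem' := hmem y hy t ht
      have hdg : HasDerivAt g (deriv g (y - t)) (y - t) :=
        (hg_sol _ hmem').1.hasDerivAt
      have h2 : HasDerivAt (fun u : ℝ => u - t) 1 y := (hasDerivAt_id y).sub_const t
      have := (hdg.comp y h2).const_mul (ρ n t)
      simpa using this
  have key := hasDerivAt_integral_of_dominated_loc_of_deriv_le
    (F := fun y t => ρ n t * g (y - t)) (F' := fun y t => ρ n t * deriv g (y - t))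
    (x₀ := x) (bound := fun t => ρ n t * K') (s := Metric.ball x (δ₀ / 4)) (Metric.ball_mem_nhds x (by linarith : (0:ℝ) < δ₀ / 4))
    (Filter.Eventually.of_forall fun y => ((hρcont.mul (hg_cont.comp
      (continuous_const.sub continuous_id))).aestronglyMeasurable))
    (hFint x) (hmeasF' x)
    (Filter.Eventually.of_forall fun t y hy => hbound t y hy)
    (hρint.mul_const K')
    (Filter.Eventually.of_forall fun t y hy => hdiff t y hy)
  obtain ⟨hF'int, hHasDeriv⟩ := key
  have hderiv_eq : deriv (fun y => ∫ t, ρ n t * g (y - t)) x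
      = ∫ t, ρ n t * deriv g (x - t) := hHasDeriv.deriv
  rw [hderiv_eq]
  set Gx : ℝ := ∫ t, ρ n t * g (x - t) with hGxdef
  set I : ℝ := ∫ t, ρ n t * deriv g (x - t) with hIdef
  -- bound |Gx| ≤ M
  have hGxM : |Gx| ≤ M := by
    rw [hGxdef]
    have hb : ∀ s : ℝ, ‖ρ n s * g (x - s)‖ ≤ ρ n s * M := by
      intro s
      rw [Real.norm_eq_abs, abs_mul, abs_of_nonneg (hρ0 s)]
      exact mul_le_mul_of_nonneg_left (hM _) (hρ0 s)
    calc |∫ t, ρ n t * g (x - t)| ≤ ∫ t, ρ n t * M :=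
          norm_integral_le_of_norm_le (hρint.mul_const M) (Filter.Eventually.of_forall hb)
      _ = (∫ t, ρ n t) * M := integral_mul_const _ _
      _ = M := by rw [hρint1, one_mul]
  -- pointwise closeness of Gx to g (x - t) for t in the support
  have hGxclose : ∀ t : ℝ, |t| < δ → |g (x - t) - Gx| ≤ 2 * K' * δ := by
    intro t ht
    have hxt : x - t ∈ Set.Ioo A B := hmem x hxball t ht
    have heq1 : g (x - t) - Gx = ∫ s, (ρ n s * g (x - t) - ρ n s * g (x - s)) := by
      rw [integral_sub (hρint.mul_const _) (hFint x), integral_mul_const, hρint1, one_mul]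
    rw [heq1]
    have hb : ∀ s : ℝ, ‖ρ n s * g (x - t) - ρ n s * g (x - s)‖ ≤ ρ n s * (2 * K' * δ) := by
      intro s
      by_cases hz : ρ n s = 0
      · simp [hz]
      · have hs := hsupp s hz
        have hxs : x - s ∈ Set.Ioo A B := hmem x hxball s hs
        rw [← mul_sub, Real.norm_eq_abs, abs_mul, abs_of_nonneg (hρ0 s)]
        refine mul_le_mul_of_nonneg_left ?_ (hρ0 s)
        have h1 : |g (x - t) - g (x - s)| ≤ K * |(x - t) - (x - s)| := hK _ hxt _ hxs
        have h2 : |(x - t) - (x - s)| = |s - t| := by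
          rw [show (x - t) - (x - s) = s - t by ring]
        have h3 : |s - t| ≤ 2 * δ := by
          obtain ⟨hs1, hs2⟩ := abs_lt.1 hs
          obtain ⟨ht1, ht2⟩ := abs_lt.1 ht
          exact le_of_lt (abs_lt.2 ⟨by linarith, by linarith⟩)
        calc |g (x - t) - g (x - s)| ≤ K * |s - t| := by rw [← h2]; exact h1
          _ ≤ K' * |s - t| := mul_le_mul_of_nonneg_right (le_max_left _ _) (abs_nonneg _)
          _ ≤ K' * (2 * δ) := mul_le_mul_of_nonneg_left h3 hK'0
          _ = 2 * K' * δ := by ring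
    calc |∫ s, (ρ n s * g (x - t) - ρ n s * g (x - s))| ≤ ∫ s, ρ n s * (2 * K' * δ) :=
          norm_integral_le_of_norm_le (hρint.mul_const _) (Filter.Eventually.of_forall hb)
      _ = (∫ s, ρ n s) * (2 * K' * δ) := integral_mul_const _ _
      _ = 2 * K' * δ := by rw [hρint1, one_mul]
  -- the combined integrand
  set h : ℝ → ℝ := fun t => ρ n t * mu - a x * (ρ n t * deriv g (x - t)) - H x Gx * ρ n t
    with hhdef
  have hhint : Integrable h :=
    ((hρint.mul_const mu).sub (hF'int.const_mul (a x))).sub (hρint.const_mul (H x Gx))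
  have hhI : ∫ t, h t = mu - a x * I - H x Gx := by
    have h2i : Integrable (fun t => a x * (ρ n t * deriv g (x - t))) := hF'int.const_mul (a x)
    have h12 : Integrable (fun t => ρ n t * mu - a x * (ρ n t * deriv g (x - t))) :=
      (hρint.mul_const mu).sub h2i
    simp only [hhdef]
    rw [integral_sub h12 (hρint.const_mul (H x Gx)),
      integral_sub (hρint.mul_const mu) h2i,
      integral_mul_const, integral_const_mul, integral_const_mul, hρint1, one_mul, mul_one,
      hIdef]
  -- pointwise bound on h
  have hhbd : ∀ t : ℝ, h t ≤ ρ n t * (E * δ) := by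
    intro t
    by_cases hz : ρ n t = 0
    · simp [hhdef, hz]
    · have ht := hsupp t hz
      have hxt : x - t ∈ Set.Ioo A B := hmem x hxball t ht
      obtain ⟨hdg, hsol⟩ := hg_sol (x - t) hxt
      have hmu : ρ n t * mu = ρ n t * (a (x - t) * deriv g (x - t) + H (x - t) (g (x - t))) := by
        rw [hsol]
      have hrw : h t = ρ n t * ((a (x - t) - a x) * deriv g (x - t)
          + (H (x - t) (g (x - t)) - H x Gx)) := by
        simp only [hhdef]
        rw [hmu]; ring
      rw [hrw]
      refine mul_le_mul_of_nonneg_left ?_ (hρ0 t)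
      have htδ : |t| ≤ δ := le_of_lt ht
      -- term 1
      have hb1 : |a (x - t) - a x| ≤ L' * δ := by
        have h1 := hL (x - t) x
        have h2 : |(x - t) - x| = |t| := by
          rw [show (x - t) - x = -t by ring, abs_neg]
        calc |a (x - t) - a x| ≤ L * |t| := by rw [← h2]; exact h1
          _ ≤ L' * |t| := mul_le_mul_of_nonneg_right (le_max_left _ _) (abs_nonneg _)
          _ ≤ L' * δ := mul_le_mul_of_nonneg_left htδ hL'0
      have hb2 : |deriv g (x - t)| ≤ K' := hg' _ hxt
      have hT1 : |(a (x - t) - a x) * deriv g (x - t)| ≤ L' * K' * δ := by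
        rw [abs_mul]
        calc |a (x - t) - a x| * |deriv g (x - t)| ≤ (L' * δ) * K' :=
              mul_le_mul hb1 hb2 (abs_nonneg _) (by positivity)
          _ = L' * K' * δ := by ring
      -- term 2: H in x
      have hb3 : |H (x - t) (g (x - t)) - H x (g (x - t))| ≤ Cb * (M ^ γ + 1) * δ := by
        have h1 := hHx (x - t) x (g (x - t))
        have h2 : |(x - t) - x| = |t| := by
          rw [show (x - t) - x = -t by ring, abs_neg]
        have hpow : |g (x - t)| ^ γ ≤ M ^ γ :=
          Real.rpow_le_rpow (abs_nonneg _) (hM _) hγ0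
        have hpow0 : (0:ℝ) ≤ |g (x - t)| ^ γ := Real.rpow_nonneg (abs_nonneg _) γ
        calc |H (x - t) (g (x - t)) - H x (g (x - t))|
            ≤ C * (|g (x - t)| ^ γ + 1) * |t| := by rw [← h2]; exact h1
          _ ≤ Cb * (|g (x - t)| ^ γ + 1) * |t| := by
              refine mul_le_mul_of_nonneg_right ?_ (abs_nonneg _)
              exact mul_le_mul_of_nonneg_right (le_max_left _ _) (by positivity)
          _ ≤ Cb * (M ^ γ + 1) * δ := by
              refine mul_le_mul ?_ htδ (abs_nonneg _) (by positivity)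
              exact mul_le_mul_of_nonneg_left (by linarith) hCb0
      -- term 3: H in p
      have hb4 : |H x (g (x - t)) - H x Gx| ≤ 2 * CR' * K' * δ := by
        have h1 : |g (x - t)| ≤ M + 1 := by linarith [hM (x - t)]
        have h2 : |Gx| ≤ M + 1 := by linarith
        have h3 := hCR x (g (x - t)) Gx h1 h2
        have h4 := hGxclose t ht
        calc |H x (g (x - t)) - H x Gx| ≤ CR * |g (x - t) - Gx| := h3
          _ ≤ CR' * |g (x - t) - Gx| :=
              mul_le_mul_of_nonneg_right (le_max_left _ _) (abs_nonneg _)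
          _ ≤ CR' * (2 * K' * δ) := mul_le_mul_of_nonneg_left h4 hCR'0
          _ = 2 * CR' * K' * δ := by ring
      have hT2 : |H (x - t) (g (x - t)) - H x Gx|
          ≤ Cb * (M ^ γ + 1) * δ + 2 * CR' * K' * δ := by
        calc |H (x - t) (g (x - t)) - H x Gx|
            ≤ |H (x - t) (g (x - t)) - H x (g (x - t))| + |H x (g (x - t)) - H x Gx| :=
              abs_sub_le _ _ _
          _ ≤ Cb * (M ^ γ + 1) * δ + 2 * CR' * K' * δ := add_le_add hb3 hb4
      have habs : |(a (x - t) - a x) * deriv g (x - t)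
          + (H (x - t) (g (x - t)) - H x Gx)| ≤ E * δ := by
        calc |(a (x - t) - a x) * deriv g (x - t) + (H (x - t) (g (x - t)) - H x Gx)|
            ≤ |(a (x - t) - a x) * deriv g (x - t)| + |H (x - t) (g (x - t)) - H x Gx| :=
              abs_add_le _ _
          _ ≤ L' * K' * δ + (Cb * (M ^ γ + 1) * δ + 2 * CR' * K' * δ) := add_le_add hT1 hT2
          _ = E * δ := by rw [hEdef]; ring
      exact le_trans (le_abs_self _) habs
  -- integrate the bound
  have hfinal : mu - a x * I - H x Gx ≤ E * δ := by
    rw [← hhI]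
    calc ∫ t, h t ≤ ∫ t, ρ n t * (E * δ) :=
          integral_mono hhint (hρint.mul_const _) hhbd
      _ = (∫ t, ρ n t) * (E * δ) := integral_mul_const _ _
      _ = E * δ := by rw [hρint1, one_mul]
  have hEδ : E * δ < ε := by
    have h1 : (E + 1) * δ < (E + 1) * (ε / (E + 1)) := by
      apply mul_lt_mul_of_pos_left hδε (by linarith)
    have h2 : (E + 1) * (ε / (E + 1)) = ε := by field_simp
    nlinarith
  linarith
end

section
/- Let g, gₙ : ℝ → ℝ be bounded functions and ξ ∈ C¹(ℝ) with 0 ≤ ξ ≤ 1. Define g_ε := ξ gₙ + (1−ξ) g. If a gₙ' + H(x,gₙ) > μ − ε and a g' + H(x,g) > μ − ε on an interval I, a is bounded, ξ' is bounded, and H(x,·) is C_R-Lipschitz on the relevant range, then a g_ε' + H(x, g_ε) > μ − ε − (C_R + ‖a‖_∞‖ξ'‖_∞)·‖g − gₙ‖_{L^∞(I)} on I. -/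
/-!
Writing `w = ξ gₙ + (1 - ξ) g`, we have
`a w' + H(w) = ξ (a gₙ' + H(gₙ)) + (1 - ξ) (a g' + H(g)) + a ξ' (gₙ - g) + [H(w) - ξ H(gₙ) - (1 - ξ) H(g)]`.
The first two terms form a convex combination of two quantities exceeding `μ - ε`, the third is at
least `-‖a‖_∞ ‖ξ'‖_∞ |g - gₙ|`, and since `w` lies within `(1 - ξ) |g - gₙ|` of `gₙ` and within
`ξ |g - gₙ|` of `g`, the Lipschitz bound makes the bracket at least `-2 ξ (1 - ξ) C_R |g - gₙ|`.
-/

open NNReal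

lemma LipschitzOnWith.convex_combination_sub_le {E : Type*} [SeminormedAddCommGroup E]
    [NormedSpace ℝ E] {f : E → ℝ} {K : ℝ≥0} {S : Set E} (hf : LipschitzOnWith K f S)
    (hS : Convex ℝ S) {p q : E} (hp : p ∈ S) (hq : q ∈ S) {t : ℝ} (ht₀ : 0 ≤ t) (ht₁ : t ≤ 1) :
    t * f p + (1 - t) * f q - K * ‖p - q‖ ≤ f (t • p + (1 - t) • q) := by
  set w := t • p + (1 - t) • q
  have hw : w ∈ S := hS hp hq ht₀ (by linarith) (by ring)
  have hwp : ‖w - p‖ = (1 - t) * ‖p - q‖ := by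
    rw [show w - p = (1 - t) • (q - p) by module, norm_smul, Real.norm_of_nonneg (by linarith),
      norm_sub_rev]
  have hwq : ‖w - q‖ = t * ‖p - q‖ := by
    rw [show w - q = t • (p - q) by module, norm_smul, Real.norm_of_nonneg ht₀]
  have hfp : f p - K * ((1 - t) * ‖p - q‖) ≤ f w := by
    have := (abs_le.1 (hf.dist_le_mul w hw p hp)).1
    rw [dist_eq_norm, hwp] at this
    linarith
  have hfq : f q - K * (t * ‖p - q‖) ≤ f w := by
    have := (abs_le.1 (hf.dist_le_mul w hw q hq)).1
    rw [dist_eq_norm, hwq] at this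
    linarith
  have hweight : 2 * t * (1 - t) ≤ 1 := by nlinarith [sq_nonneg (2 * t - 1)]
  have hK : 0 ≤ (K : ℝ) * ‖p - q‖ := by positivity
  linarith [mul_le_mul_of_nonneg_left hfp ht₀, mul_le_mul_of_nonneg_left hfq (sub_nonneg.2 ht₁),
    mul_le_mul_of_nonneg_right hweight hK]

lemma HasDerivAt.cutoff_interpolation {ξ f g : ℝ → ℝ} {ξ' f' g' x : ℝ}
    (hξ : HasDerivAt ξ ξ' x) (hf : HasDerivAt f f' x) (hg : HasDerivAt g g' x) :
    HasDerivAt (fun y => ξ y * f y + (1 - ξ y) * g y)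
      (ξ x * f' + (1 - ξ x) * g' + ξ' * (f x - g x)) x :=
  ((hξ.mul hf).add ((hξ.const_sub 1).mul hg)).congr_deriv (by ring)

theorem cutoff_interpolation_supersolution_general
    (a : ℝ → ℝ) (H : ℝ → ℝ → ℝ) (g gn ξ : ℝ → ℝ)
    (mu ε R CR Ca Cξ δ A B : ℝ)
    (ha_bdd : ∀ x, |a x| ≤ Ca)
    (hξ : ContDiff ℝ 1 ξ) (hξ01 : ∀ x, 0 ≤ ξ x ∧ ξ x ≤ 1)
    (hξ' : ∀ x, |deriv ξ x| ≤ Cξ)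
    (hgR : ∀ x, |g x| ≤ R) (hgnR : ∀ x, |gn x| ≤ R)
    (hCR : 0 ≤ CR)
    (hH_lip : ∀ x p q, |p| ≤ R → |q| ≤ R → |H x p - H x q| ≤ CR * |p - q|)
    (hg_diff : ∀ x ∈ Set.Ioo A B, DifferentiableAt ℝ g x)
    (hgn_diff : ∀ x ∈ Set.Ioo A B, DifferentiableAt ℝ gn x)
    (hδ : ∀ x ∈ Set.Ioo A B, |g x - gn x| ≤ δ)
    (hg_sup : ∀ x ∈ Set.Ioo A B, a x * deriv g x + H x (g x) > mu - ε)
    (hgn_sup : ∀ x ∈ Set.Ioo A B, a x * deriv gn x + H x (gn x) > mu - ε) :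
    ∀ x ∈ Set.Ioo A B,
      a x * deriv (fun y => ξ y * gn y + (1 - ξ y) * g y) x
        + H x (ξ x * gn x + (1 - ξ x) * g x)
        > mu - ε - (CR + Ca * Cξ) * δ := by
  intro x hx
  obtain ⟨hξ₀, hξ₁⟩ := hξ01 x
  have hdist : |gn x - g x| ≤ δ := abs_sub_comm (g x) (gn x) ▸ hδ x hx
  rw [(((hξ.differentiable one_ne_zero) x).hasDerivAt.cutoff_interpolation
    (hgn_diff x hx).hasDerivAt (hg_diff x hx).hasDerivAt).deriv]
  have hlip : LipschitzOnWith CR.toNNReal (H x) (Set.Icc (-R) R) :=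
    LipschitzOnWith.of_dist_le_mul fun p hp q hq => by
      simpa only [Real.dist_eq, Real.coe_toNNReal CR hCR] using
        hH_lip x p q (abs_le.2 hp) (abs_le.2 hq)
  have hH := hlip.convex_combination_sub_le (convex_Icc (-R) R) (abs_le.1 (hgnR x))
    (abs_le.1 (hgR x)) hξ₀ hξ₁
  simp only [Real.coe_toNNReal CR hCR, smul_eq_mul, Real.norm_eq_abs] at hH
  have hcomb : mu - ε < ξ x * (a x * deriv gn x + H x (gn x))
      + (1 - ξ x) * (a x * deriv g x + H x (g x)) :=
    convex_Ioi (mu - ε) (hgn_sup x hx) (hg_sup x hx) hξ₀ (by linarith) (by ring)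
  have hcross : |a x * deriv ξ x * (gn x - g x)| ≤ Ca * Cξ * δ := by
    have hCa : 0 ≤ Ca := (abs_nonneg _).trans (ha_bdd x)
    rw [abs_mul, abs_mul]
    exact mul_le_mul (mul_le_mul (ha_bdd x) (hξ' x) (abs_nonneg _) hCa) hdist (abs_nonneg _)
      (mul_nonneg hCa ((abs_nonneg _).trans (hξ' x)))
  have hCRδ : CR * |gn x - g x| ≤ CR * δ := mul_le_mul_of_nonneg_left hdist hCR
  linarith [neg_abs_le (a x * deriv ξ x * (gn x - g x))]

/-- Interpolation of two strict supersolutions of `a f' + H(x,f) = μ - ε` by a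
`C¹` cutoff `ξ` with `0 ≤ ξ ≤ 1`: the function `g_ε := ξ gₙ + (1-ξ) g` satisfies
`a g_ε' + H(x,g_ε) > μ - ε - (C_R + ‖a‖_∞ ‖ξ'‖_∞) ‖g - gₙ‖_{L^∞(I)}` on `I`. -/
theorem cutoff_interpolation_supersolution
    (a : ℝ → ℝ) (H : ℝ → ℝ → ℝ) (g gn ξ : ℝ → ℝ)
    (mu ε R CR Ca Cξ δ A B : ℝ) (hAB : A < B)
    (ha_bdd : ∀ x, |a x| ≤ Ca)
    (hξ : ContDiff ℝ 1 ξ) (hξ01 : ∀ x, 0 ≤ ξ x ∧ ξ x ≤ 1)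
    (hξ' : ∀ x, |deriv ξ x| ≤ Cξ)
    (hgR : ∀ x, |g x| ≤ R) (hgnR : ∀ x, |gn x| ≤ R)
    (hCR : 0 ≤ CR)
    (hH_lip : ∀ x p q, |p| ≤ R → |q| ≤ R → |H x p - H x q| ≤ CR * |p - q|)
    (hg_diff : ∀ x ∈ Set.Ioo A B, DifferentiableAt ℝ g x)
    (hgn_diff : ∀ x ∈ Set.Ioo A B, DifferentiableAt ℝ gn x)
    (hδ : ∀ x ∈ Set.Ioo A B, |g x - gn x| ≤ δ)
    (hg_sup : ∀ x ∈ Set.Ioo A B, a x * deriv g x + H x (g x) > mu - ε)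
    (hgn_sup : ∀ x ∈ Set.Ioo A B, a x * deriv gn x + H x (gn x) > mu - ε) :
    ∀ x ∈ Set.Ioo A B,
      a x * deriv (fun y => ξ y * gn y + (1 - ξ y) * g y) x
        + H x (ξ x * gn x + (1 - ξ x) * g x)
        > mu - ε - (CR + Ca * Cξ) * δ :=
  cutoff_interpolation_supersolution_general a H g gn ξ mu ε R CR Ca Cξ δ A B ha_bdd hξ hξ01 hξ' hgR
    hgnR hCR hH_lip hg_diff hgn_diff hδ hg_sup hgn_sup
end

section
/- Let fₙ : ℝ → ℝ be a nondecreasing sequence of C¹ functions, each solving a(x)fₙ' + H(x,fₙ) = λₙ with λₙ → λ, uniformly bounded by a constant K, where a : ℝ → (0,∞) is continuous and H is continuous. Then f := sup_n fₙ is a C¹ solution of a(x)f' + H(x,f) = λ on ℝ, and fₙ → f in the local C¹ topology. -/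
/-!
The equation gives `fₙ' = (λₙ - H(x, fₙ)) / a`, which is bounded on compact sets uniformly in `n`;
so the `fₙ` are locally equi-Lipschitz and their pointwise limit `f = sup fₙ` is continuous.
Dini's theorem upgrades the monotone pointwise convergence to locally uniform convergence, and
uniform continuity of `(x, μ, y) ↦ (μ - H(x, y)) / a(x)` on compact sets then makes `fₙ'` converge
locally uniformly to `(λ - H(x, f)) / a`, which is therefore the derivative of `f`.
-/

open Filter Topology Set Function NNReal

theorem ContinuousOn.comp_tendstoUniformlyOn_of_isCompact {ι X Y Z : Type*} [UniformSpace X]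
    [UniformSpace Y] [UniformSpace Z] {p : Filter ι} {Φ : X → Y → Z} {F : ι → X → Y}
    {f : X → Y} {S : Set X} {T : Set Y} (hΦ : ContinuousOn (uncurry Φ) (S ×ˢ T))
    (hS : IsCompact S) (hT : IsCompact T) (hF : TendstoUniformlyOn F f p S)
    (hFT : ∀ᶠ n in p, ∀ x ∈ S, F n x ∈ T) (hfT : ∀ x ∈ S, f x ∈ T) :
    TendstoUniformlyOn (fun n x => Φ x (F n x)) (fun x => Φ x (f x)) p S := by
  have hid : TendstoUniformlyOn (fun (_ : ι) (x : X) => x) id p S :=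
    fun _ hu => Eventually.of_forall fun _ _ _ => refl_mem_uniformity hu
  have hgraph : TendstoUniformlyOn (fun n x => (x, F n x)) (fun x => (x, f x)) p S :=
    fun u hu => ((hid.prodMk hF) u hu).diag_of_prod
  refine ((hS.prod hT).uniformContinuousOn_of_continuous hΦ).comp_tendstoUniformlyOn_eventually
    ?_ ?_ hgraph
  · exact hFT.mono fun n hn x hx => ⟨hx, hn x hx⟩
  · exact fun x hx => ⟨hx, hfT x hx⟩

theorem locallyLipschitz_of_tendsto_of_nnnorm_deriv_le {ι 𝕜 G : Type*} [RCLike 𝕜]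
    [NormedAddCommGroup G] [NormedSpace 𝕜 G] {l : Filter ι} [l.NeBot] {f : ι → 𝕜 → G}
    {g : 𝕜 → G} (hf : ∀ i, Differentiable 𝕜 (f i))
    (hbound : ∀ S : Set 𝕜, IsCompact S → ∃ C : ℝ≥0, ∀ i, ∀ x ∈ S, ‖deriv (f i) x‖₊ ≤ C)
    (hlim : ∀ x, Tendsto (f · x) l (𝓝 (g x))) : LocallyLipschitz g := by
  intro x
  obtain ⟨C, hC⟩ := hbound _ (isCompact_closedBall x 1)
  refine ⟨C, Metric.closedBall x 1, Metric.closedBall_mem_nhds x one_pos, ?_⟩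
  exact (isClosed_setOfPred_lipschitzOnWith C _).mem_of_tendsto (tendsto_pi_nhds.2 hlim)
    (Eventually.of_forall fun i => (convex_closedBall x 1).lipschitzOnWith_of_nnnorm_deriv_le
      (fun y _ => hf i y) (hC i))

/-- `odeRHS a H x (μ, y)` is the slope `f' x` forced by `a x * f' x + H x y = μ` when `f x = y`. -/
noncomputable def odeRHS (a : ℝ → ℝ) (H : ℝ → ℝ → ℝ) (x : ℝ) (q : ℝ × ℝ) : ℝ :=
  (q.1 - H x q.2) / a x

section ODE

variable {a : ℝ → ℝ} {H : ℝ → ℝ → ℝ}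

theorem continuous_odeRHS (ha : Continuous a) (ha₀ : ∀ x, a x ≠ 0)
    (hH : Continuous fun q : ℝ × ℝ => H q.1 q.2) : Continuous (uncurry (odeRHS a H)) :=
  ((continuous_snd.fst).sub (hH.comp (continuous_fst.prodMk continuous_snd.snd))).div
    (ha.comp continuous_fst) fun p => ha₀ p.1

theorem deriv_eq_odeRHS {f : ℝ → ℝ} {μ x : ℝ} (hax : a x ≠ 0)
    (h : a x * deriv f x + H x (f x) = μ) : deriv f x = odeRHS a H x (μ, f x) :=
  eq_div_of_mul_eq hax (by linarith)

theorem mul_odeRHS_add {x μ y : ℝ} (hax : a x ≠ 0) : a x * odeRHS a H x (μ, y) + H x y = μ := by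
  rw [odeRHS, mul_div_cancel₀ _ hax, sub_add_cancel]

variable {ι : Type*} {f : ι → ℝ → ℝ} {μ : ι → ℝ} {K : ℝ}

theorem exists_nnnorm_deriv_le_of_ode (ha : Continuous a) (ha₀ : ∀ x, a x ≠ 0)
    (hH : Continuous fun q : ℝ × ℝ => H q.1 q.2)
    (hsol : ∀ i x, a x * deriv (f i) x + H x (f i x) = μ i)
    (hμ : Bornology.IsBounded (range μ)) (hf : ∀ i x, |f i x| ≤ K) {S : Set ℝ}
    (hS : IsCompact S) : ∃ C : ℝ≥0, ∀ i, ∀ x ∈ S, ‖deriv (f i) x‖₊ ≤ C := by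
  obtain ⟨C, hC⟩ := (hS.prod (hμ.isCompact_closure.prod (isCompact_Icc (a := -K) (b := K))))
    |>.exists_bound_of_continuousOn (continuous_odeRHS ha ha₀ hH).continuousOn
  refine ⟨C.toNNReal, fun i x hx => ?_⟩
  rw [← NNReal.coe_le_coe, coe_nnnorm, Real.coe_toNNReal', deriv_eq_odeRHS (ha₀ x) (hsol i x)]
  exact le_max_of_le_left <| hC (x, μ i, f i x)
    ⟨hx, subset_closure (mem_range_self i), abs_le.1 (hf i x)⟩

theorem tendstoLocallyUniformly_deriv_of_ode {l : Filter ι} [l.NeBot] {lim : ℝ} {g : ℝ → ℝ}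
    (ha : Continuous a) (ha₀ : ∀ x, a x ≠ 0) (hH : Continuous fun q : ℝ × ℝ => H q.1 q.2)
    (hsol : ∀ i x, a x * deriv (f i) x + H x (f i x) = μ i)
    (hμ : Tendsto μ l (𝓝 lim)) (hf : ∀ i x, |f i x| ≤ K)
    (hfg : TendstoLocallyUniformly f g l) :
    TendstoLocallyUniformly (fun i => deriv (f i)) (fun x => odeRHS a H x (lim, g x)) l := by
  have hg : ∀ x, g x ∈ Icc (-K) K := fun x =>
    isClosed_Icc.mem_of_tendsto (hfg.tendstoLocallyUniformlyOn.tendsto_at (mem_univ x))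
      (Eventually.of_forall fun i => abs_le.1 (hf i x))
  have hpair : TendstoLocallyUniformly (fun i x => (μ i, f i x)) (fun x => (lim, g x)) l :=
    hμ.tendstoUniformly_const.tendstoLocallyUniformly.prodMk hfg
  have hderiv : (fun i => deriv (f i)) = fun i x => odeRHS a H x (μ i, f i x) :=
    funext₂ fun i x => deriv_eq_odeRHS (ha₀ x) (hsol i x)
  rw [hderiv, tendstoLocallyUniformly_iff_forall_isCompact]
  intro S hS
  refine (continuous_odeRHS ha ha₀ hH).continuousOn.comp_tendstoUniformlyOn_of_isCompact hS
    ((isCompact_closedBall lim 1).prod isCompact_Icc)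
    (tendstoLocallyUniformly_iff_forall_isCompact.1 hpair S hS) ?_
    (fun x _ => ⟨Metric.mem_closedBall_self zero_le_one, hg x⟩)
  filter_upwards [hμ (Metric.closedBall_mem_nhds lim one_pos)] with i hi x _
  exact ⟨hi, abs_le.1 (hf i x)⟩

end ODE

/-- Monotone stability: if `fₙ` is a nondecreasing sequence of `C¹` solutions of
`a fₙ' + H(x, fₙ) = λₙ` with `λₙ → λ`, uniformly bounded by `K`, `a > 0`
continuous and `H` continuous, then `f := sup_n fₙ` is a `C¹` solution of
`a f' + H(x,f) = λ` and `fₙ → f` in the local `C¹` topology. -/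
theorem monotone_stability_ode
    (a : ℝ → ℝ) (H : ℝ → ℝ → ℝ) (fn : ℕ → ℝ → ℝ) (lamn : ℕ → ℝ) (lam K : ℝ)
    (ha_cont : Continuous a) (ha_pos : ∀ x, 0 < a x)
    (hH_cont : Continuous fun q : ℝ × ℝ => H q.1 q.2)
    (hmono : ∀ n x, fn n x ≤ fn (n+1) x)
    (hC1 : ∀ n, ContDiff ℝ 1 (fn n))
    (hsol : ∀ n x, a x * deriv (fn n) x + H x (fn n x) = lamn n)
    (hlam : Tendsto lamn atTop (nhds lam))
    (hbdd : ∀ n x, |fn n x| ≤ K) :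
    ContDiff ℝ 1 (fun x => ⨆ n, fn n x) ∧
      (∀ x, a x * deriv (fun y => ⨆ n, fn n y) x + H x (⨆ n, fn n x) = lam) ∧
      ∀ r : ℝ,
        TendstoUniformlyOn (fun n x => fn n x) (fun x => ⨆ n, fn n x) atTop
          (Set.Icc (-r) r) ∧
        TendstoUniformlyOn (fun n => deriv (fn n))
          (deriv fun x => ⨆ n, fn n x) atTop (Set.Icc (-r) r) := by
  set F : ℝ → ℝ := fun x => ⨆ n, fn n x
  have ha₀ : ∀ x, a x ≠ 0 := fun x => (ha_pos x).ne'
  have hdiff : ∀ n, Differentiable ℝ (fn n) := fun n => (hC1 n).differentiable one_ne_zero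
  have hfn_mono : Monotone fn := monotone_nat_of_le_succ hmono
  have hlim : ∀ x, Tendsto (fn · x) atTop (𝓝 (F x)) := fun x =>
    tendsto_atTop_ciSup (fun _ _ h => hfn_mono h x)
      ⟨K, forall_mem_range.2 fun n => (abs_le.1 (hbdd n x)).2⟩
  have hF_cont : Continuous F :=
    (locallyLipschitz_of_tendsto_of_nnnorm_deriv_le hdiff (fun _ hS =>
      exists_nnnorm_deriv_le_of_ode ha_cont ha₀ hH_cont hsol
        (Metric.isBounded_range_of_tendsto lamn hlam) hbdd hS) hlim).continuous
  have hunif : TendstoLocallyUniformly fn F atTop :=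
    hfn_mono.tendstoLocallyUniformly_of_forall_tendsto (fun n => (hC1 n).continuous) hF_cont hlim
  have hderiv_unif := tendstoLocallyUniformly_deriv_of_ode ha_cont ha₀ hH_cont hsol hlam hbdd hunif
  have hF_deriv : ∀ x, HasDerivAt F (odeRHS a H x (lam, F x)) x := fun x =>
    hasDerivAt_of_tendstoLocallyUniformlyOn isOpen_univ
      (tendstoLocallyUniformlyOn_univ.2 hderiv_unif)
      (Eventually.of_forall fun n y _ => (hdiff n y).hasDerivAt) (fun y _ => hlim y) (mem_univ x)
  have hderivF : deriv F = fun x => odeRHS a H x (lam, F x) := funext fun x => (hF_deriv x).deriv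
  refine ⟨contDiff_one_iff_deriv.2 ⟨fun x => (hF_deriv x).differentiableAt, ?_⟩,
    fun x => ?_, fun r => ?_⟩ <;> rw [hderivF]
  · exact (continuous_odeRHS ha_cont ha₀ hH_cont).comp
      (continuous_id.prodMk (continuous_const.prodMk hF_cont))
  · exact mul_odeRHS_add (ha₀ x)
  · exact ⟨tendstoLocallyUniformly_iff_forall_isCompact.1 hunif _ isCompact_Icc,
      tendstoLocallyUniformly_iff_forall_isCompact.1 hderiv_unif _ isCompact_Icc⟩
end

section
/- Let a : ℝ → (0,∞) be continuous and H : ℝ × ℝ → ℝ continuous. Suppose 𝓢 is a nonempty compact (in C(ℝ) with local uniform topology) family of C¹ solutions of a(x)f' + H(x,f) = λ on ℝ. Then the pointwise infimum f̲(x) := inf_{f∈𝓢} f(x) and supremum f̄(x) := sup_{f∈𝓢} f(x) are themselves C¹ solutions of the same ODE. -/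
/-!
Write the equation as `f' = φ(x, f)` with `φ = (λ - H) / a` continuous. Since evaluation is
continuous on `C(ℝ, ℝ)`, the infimum `F` over the compact family is attained at every point, and a
compact family is equicontinuous. If `f₀ ∈ 𝓢` attains `F(x)`, then `F ≤ f₀` bounds the difference
quotients of `F` at `x` from above by `f₀'(x) = φ(x, F x)` up to `o(1)`. If `f₁ ∈ 𝓢` attains `F(y)`,
then `F(y) - F(x) ≥ f₁(y) - f₁(x)`, and by equicontinuity `f₁` stays close to `F(x)` between `x`
and `y`, so `f₁' = φ(t, f₁ t)` is close to `φ(x, F x)` there and the mean value inequality gives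
the matching lower bound. Hence `F' = φ(x, F)`, which is continuous. The supremum is the
infimum of the negated family.
-/

open Filter Topology Set Function Metric

lemma IsCompact.equicontinuousAt_coe {X α : Type*} [TopologicalSpace X] [LocallyCompactSpace X]
    [PseudoMetricSpace α] {S : Set C(X, α)} (hS : IsCompact S) (x : X) :
    EquicontinuousAt (fun f : S => ((f : C(X, α)) : X → α)) x := by
  rw [Metric.equicontinuousAt_iff_right]
  intro ε hε
  have hnear : ∀ f ∈ S, ∀ᶠ p : X × C(X, α) in 𝓝 (x, f), dist (p.2 x) (p.2 p.1) < ε := by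
    intro f _
    have hcont : Continuous fun p : X × C(X, α) => dist (p.2 x) (p.2 p.1) :=
      (continuous_eval_const x |>.comp continuous_snd).dist
        (continuous_eval.comp continuous_swap)
    exact hcont.continuousAt.eventually_lt continuousAt_const (by simpa using hε)
  filter_upwards [hS.eventually_forall_of_forall_eventually
    (P := fun y f => dist (f x) (f y) < ε) hnear] with y hy f
  exact hy f f.2

lemma IsCompact.isLeast_iInf {β α : Type*} [TopologicalSpace β]
    [ConditionallyCompleteLinearOrder α] [TopologicalSpace α] [ClosedIicTopology α]
    {s : Set β} (hs : IsCompact s) (hne : s.Nonempty) {g : β → α} (hg : ContinuousOn g s) :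
    IsLeast (range fun b : s => g b) (⨅ b : s, g b) := by
  rw [← sInf_image', ← image_eq_range]
  exact (hs.image_of_continuousOn hg).isLeast_sInf (hne.image g)

lemma IsCompact.isGreatest_iSup {β α : Type*} [TopologicalSpace β]
    [ConditionallyCompleteLinearOrder α] [TopologicalSpace α] [ClosedIciTopology α]
    {s : Set β} (hs : IsCompact s) (hne : s.Nonempty) {g : β → α} (hg : ContinuousOn g s) :
    IsGreatest (range fun b : s => g b) (⨆ b : s, g b) := by
  rw [← sSup_image', ← image_eq_range]
  exact (hs.image_of_continuousOn hg).isGreatest_sSup (hne.image g)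

section Envelope

variable {ι : Type*} {u : ι → ℝ → ℝ} {F : ℝ → ℝ} {x : ℝ}

lemma continuousAt_of_isLeast_range (hF : ∀ y, IsLeast (range fun i => u i y) (F y))
    (hu : EquicontinuousAt u x) : ContinuousAt F x := by
  rw [ContinuousAt, Metric.tendsto_nhds]
  intro ε hε
  filter_upwards [Metric.equicontinuousAt_iff_right.1 hu ε hε] with y hy
  obtain ⟨i, hi⟩ := (hF x).1
  obtain ⟨j, hj⟩ := (hF y).1
  have hiy := (hF y).2 ⟨i, rfl⟩
  have hjx := (hF x).2 ⟨j, rfl⟩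
  have hi' := hy i
  have hj' := hy j
  simp only [Real.dist_eq, abs_lt] at hi' hj' ⊢
  simp only at hi hj hiy hjx
  constructor <;> linarith

lemma eventually_sub_sub_le_of_le_of_hasDerivAt {g : ℝ → ℝ} {c ε : ℝ} (hg : HasDerivAt g c x)
    (hle : ∀ y, F y ≤ g y) (hx : g x = F x) (hε : 0 < ε) :
    ∀ᶠ y in 𝓝 x, F y - F x - (y - x) * c ≤ ε * |y - x| := by
  filter_upwards [hg.isLittleO.bound hε] with y hy
  rw [smul_eq_mul, Real.norm_eq_abs, Real.norm_eq_abs, hx] at hy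
  linarith [le_abs_self (g y - F x - (y - x) * c), hle y]

lemma eventually_neg_le_sub_sub_of_isLeast_range {φ : ℝ → ℝ → ℝ} {ε : ℝ}
    (hF : ∀ y, IsLeast (range fun i => u i y) (F y)) (hu : EquicontinuousAt u x)
    (hderiv : ∀ i y, HasDerivAt (u i) (φ y (u i y)) y) (hφ : ContinuousAt (uncurry φ) (x, F x))
    (hε : 0 < ε) :
    ∀ᶠ y in 𝓝 x, -(ε * |y - x|) ≤ F y - F x - (y - x) * φ x (F x) := by
  obtain ⟨η, hη, hφη⟩ := Metric.continuousAt_iff.1 hφ ε hε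
  have hnear : ∀ᶠ t in 𝓝 x, dist t x < η ∧ dist (F t) (F x) < η / 3 ∧
      ∀ i, dist (u i x) (u i t) < η / 3 :=
    Filter.Eventually.and (ball_mem_nhds x hη) <| Filter.Eventually.and
      ((continuousAt_of_isLeast_range hF hu).eventually (ball_mem_nhds _ (by positivity)))
      (Metric.equicontinuousAt_iff_right.1 hu _ (by positivity))
  obtain ⟨r, hr, hball⟩ := Metric.eventually_nhds_iff_ball.1 hnear
  filter_upwards [ball_mem_nhds x hr] with y hy
  obtain ⟨i, hi⟩ := (hF y).1
  have hclose : ∀ t ∈ ball x r, ‖φ t (u i t) - φ x (F x)‖ ≤ ε := by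
    intro t ht
    obtain ⟨htx, -, hut⟩ := hball t ht
    obtain ⟨-, hFy, huy⟩ := hball y hy
    refine (hφη (x := (t, u i t)) ?_).le
    rw [Prod.dist_eq, max_lt_iff]
    refine ⟨htx, ?_⟩
    calc dist (u i t) (F x)
        ≤ dist (u i t) (u i x) + dist (u i x) (u i y) + dist (F y) (F x) := by
          rw [← hi]; exact dist_triangle4 _ _ _ _
      _ < η / 3 + η / 3 + η / 3 := by
          gcongr
          exacts [(dist_comm _ _).trans_lt (hut i), huy i]
      _ = η := by ring
  have hmvt := Convex.norm_image_sub_le_of_norm_hasDerivWithin_le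
    (f := fun t => u i t - t * φ x (F x))
    (fun t _ => ((hderiv i t).sub ((hasDerivAt_id t).mul_const _)).hasDerivWithinAt)
    (by simpa using hclose) (convex_ball x r) (mem_ball_self hr) hy
  have hix : F x ≤ u i x := (hF x).2 ⟨i, rfl⟩
  simp only [Real.norm_eq_abs, abs_le] at hmvt hi
  nlinarith [hmvt.1]

theorem hasDerivAt_of_isLeast_range {φ : ℝ → ℝ → ℝ}
    (hF : ∀ y, IsLeast (range fun i => u i y) (F y)) (hu : EquicontinuousAt u x)
    (hderiv : ∀ i y, HasDerivAt (u i) (φ y (u i y)) y) (hφ : ContinuousAt (uncurry φ) (x, F x)) :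
    HasDerivAt F (φ x (F x)) x := by
  obtain ⟨i, hi⟩ := (hF x).1
  replace hi : u i x = F x := hi
  rw [hasDerivAt_iff_isLittleO, Asymptotics.isLittleO_iff]
  intro ε hε
  filter_upwards [eventually_sub_sub_le_of_le_of_hasDerivAt (hi ▸ hderiv i x)
      (fun y => (hF y).2 ⟨i, rfl⟩) hi hε,
    eventually_neg_le_sub_sub_of_isLeast_range hF hu hderiv hφ hε] with y hupper hlower
  rw [smul_eq_mul, Real.norm_eq_abs, Real.norm_eq_abs, abs_le]
  exact ⟨hlower, hupper⟩

theorem hasDerivAt_of_isGreatest_range {φ : ℝ → ℝ → ℝ}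
    (hF : ∀ y, IsGreatest (range fun i => u i y) (F y)) (hu : EquicontinuousAt u x)
    (hderiv : ∀ i y, HasDerivAt (u i) (φ y (u i y)) y) (hφ : ContinuousAt (uncurry φ) (x, F x)) :
    HasDerivAt F (φ x (F x)) x := by
  have hneg := hasDerivAt_of_isLeast_range (u := fun i y => -u i y) (F := fun y => -F y)
    (x := x) (φ := fun t z => -φ t (-z)) ?_ ?_ ?_ ?_
  · simpa using hneg.fun_neg
  · intro y
    obtain ⟨i, hi⟩ := (hF y).1
    exact ⟨⟨i, by simp only [← hi]⟩, by rintro _ ⟨j, rfl⟩; exact neg_le_neg ((hF y).2 ⟨j, rfl⟩)⟩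
  · exact isometry_neg.isUniformInducing.equicontinuousAt_iff.1 hu
  · intro i y
    simpa using (hderiv i y).fun_neg
  · exact (hφ.comp_of_eq (f := fun p : ℝ × ℝ => (p.1, -p.2)) (by fun_prop) (by simp)).neg

end Envelope

theorem contDiff_one_of_hasDerivAt {F : ℝ → ℝ} {φ : ℝ → ℝ → ℝ} (hφ : Continuous (uncurry φ))
    (hF : ∀ x, HasDerivAt F (φ x (F x)) x) : ContDiff ℝ 1 F := by
  have hFdiff : Differentiable ℝ F := fun x => (hF x).differentiableAt
  have hderiv : deriv F = fun x => φ x (F x) := funext fun x => (hF x).deriv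
  rw [contDiff_one_iff_deriv, hderiv]
  exact ⟨hFdiff, hφ.comp (continuous_id.prodMk hFdiff.continuous)⟩

section ODE

variable (a : ℝ → ℝ) (H : ℝ → ℝ → ℝ) (lam : ℝ)

noncomputable def odeField (t y : ℝ) : ℝ := (lam - H t y) / a t

variable {a H lam}

lemma continuous_odeField (ha : Continuous a) (ha_ne : ∀ t, a t ≠ 0)
    (hH : Continuous fun q : ℝ × ℝ => H q.1 q.2) : Continuous (uncurry (odeField a H lam)) :=
  (continuous_const.sub hH).div (ha.comp continuous_fst) fun q => ha_ne q.1

lemma hasDerivAt_odeField_iff {f : ℝ → ℝ} {x : ℝ} (hf : DifferentiableAt ℝ f x) (ha : a x ≠ 0) :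
    HasDerivAt f (odeField a H lam x (f x)) x ↔ a x * deriv f x + H x (f x) = lam := by
  have hnormal : deriv f x = odeField a H lam x (f x) ↔ a x * deriv f x + H x (f x) = lam := by
    rw [odeField, eq_div_iff ha]
    constructor <;> intro h <;> linarith
  exact ⟨fun h => hnormal.1 h.deriv, fun h => hnormal.2 h ▸ hf.hasDerivAt⟩

end ODE

/-- Lattice property of compact solution families: if `𝓢` is a nonempty compact
(for the compact-open, i.e. local uniform, topology) family of `C¹` solutions of
`a f' + H(x, f) = λ` on `ℝ`, then the pointwise infimum and supremum over `𝓢`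
are themselves `C¹` solutions of the same ODE. -/
theorem compact_family_inf_sup_solution
    (a : ℝ → ℝ) (H : ℝ → ℝ → ℝ) (lam : ℝ) (S : Set C(ℝ, ℝ))
    (ha_cont : Continuous a) (ha_pos : ∀ x, 0 < a x)
    (hH_cont : Continuous fun q : ℝ × ℝ => H q.1 q.2)
    (hS_ne : S.Nonempty) (hS_cpt : IsCompact S)
    (hS_sol : ∀ f ∈ S, ContDiff ℝ 1 (f : ℝ → ℝ) ∧
      ∀ x, a x * deriv (f : ℝ → ℝ) x + H x (f x) = lam) :
    (ContDiff ℝ 1 (fun x => ⨅ f : S, (f : C(ℝ, ℝ)) x) ∧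
      ∀ x, a x * deriv (fun y => ⨅ f : S, (f : C(ℝ, ℝ)) y) x
        + H x (⨅ f : S, (f : C(ℝ, ℝ)) x) = lam) ∧
    (ContDiff ℝ 1 (fun x => ⨆ f : S, (f : C(ℝ, ℝ)) x) ∧
      ∀ x, a x * deriv (fun y => ⨆ f : S, (f : C(ℝ, ℝ)) y) x
        + H x (⨆ f : S, (f : C(ℝ, ℝ)) x) = lam) := by
  have ha_ne : ∀ x, a x ≠ 0 := fun x => (ha_pos x).ne'
  have hφ := continuous_odeField (lam := lam) ha_cont ha_ne hH_cont
  have hderiv : ∀ (f : S) y, HasDerivAt (f : C(ℝ, ℝ)) (odeField a H lam y ((f : C(ℝ, ℝ)) y)) y :=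
    fun f y => (hasDerivAt_odeField_iff
      (((hS_sol f f.2).1.differentiable one_ne_zero) y) (ha_ne y)).2 ((hS_sol f f.2).2 y)
  have hsolution : ∀ F : ℝ → ℝ, (∀ x, HasDerivAt F (odeField a H lam x (F x)) x) →
      ContDiff ℝ 1 F ∧ ∀ x, a x * deriv F x + H x (F x) = lam := fun F hF =>
    ⟨contDiff_one_of_hasDerivAt hφ hF,
      fun x => (hasDerivAt_odeField_iff (hF x).differentiableAt (ha_ne x)).1 (hF x)⟩
  refine ⟨hsolution _ fun x => ?_, hsolution _ fun x => ?_⟩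
  · exact hasDerivAt_of_isLeast_range
      (fun y => hS_cpt.isLeast_iInf hS_ne (continuous_eval_const y).continuousOn)
      (hS_cpt.equicontinuousAt_coe x) hderiv hφ.continuousAt
  · exact hasDerivAt_of_isGreatest_range
      (fun y => hS_cpt.isGreatest_iSup hS_ne (continuous_eval_const y).continuousOn)
      (hS_cpt.equicontinuousAt_coe x) hderiv hφ.continuousAt
end

section
/- Let a : ℝ → (0,∞) and G : ℝ × ℝ → ℝ be continuous, with G locally Lipschitz in its first (momentum) variable uniformly in x. Suppose m, M ∈ C¹(ℝ) are bounded, m < M on ℝ, and a(x)m'(x) + G(m(x),x) < 0 < a(x)M'(x) + G(M(x),x) for all x. Then there exists f ∈ C¹(ℝ) solving a(x)f'(x) + G(f(x),x) = 0 on ℝ with m(x) < f(x) < M(x) for all x ∈ ℝ. -/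
/-!
Solving for `f'` turns the equation into `f' = v(x, f)` with `v(x, p) = -G(p, x) / a(x)`; a strict
subsolution `m` satisfies `m' < v(x, m)` and a strict supersolution `M` satisfies `M' > v(x, M)`.
Since `m` and `M` are bounded, `G` may be frozen outside a large interval `[-R, R]`, after which
`v` is bounded and Lipschitz in `p` on every time strip, so every initial value problem has a
unique global solution, and distinct solutions never cross. A solution can only cross `m` upwards
and `M` downwards. Let `Fₙ` start on `m` and `Hₙ` on `M` at time `-n`: then `Fₙ(0)` increases,
`Hₙ(0)` decreases and `Fₙ(0) < Hₙ(0)`. The solution `f` with `f(0) = supₙ Fₙ(0)` stays strictly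
between `m` and `M`: if it reached `m` at some time, it would lie below `m`, hence below some
`Fₙ`, just before, contradicting `Fₙ(0) ≤ f(0)`; symmetrically for `M`.
-/

open Set Filter Topology Metric
open scoped NNReal

theorem pos_of_nonneg_of_deriv_pos_at_zeros {g g' : ℝ → ℝ} (hg : ∀ t, HasDerivAt g (g' t) t)
    (hzero : ∀ t, g t = 0 → 0 < g' t) {s t : ℝ} (hs : 0 ≤ g s) (hst : s < t) : 0 < g t := by
  have hnonneg : ∀ u ∈ Icc s t, 0 ≤ g u := fun u hu => by
    simpa using image_le_of_deriv_right_lt_deriv_boundary (f := fun u => -g u)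
      (f' := fun u => -g' u) (B := 0) (B' := 0)
      (HasDerivAt.continuousOn fun u _ => (hg u).neg) (fun u _ => (hg u).neg.hasDerivWithinAt)
      (by simpa using hs) (fun _ => hasDerivAt_const _ _)
      (fun u _ hu => by simpa using hzero u (neg_eq_zero.1 hu)) hu
  refine (hnonneg t ⟨hst.le, le_rfl⟩).lt_of_ne' fun ht => (hzero t ht).not_ge ?_
  -- `g ≥ 0 = g t` to the left of `t`, so the left difference quotients at `t` are `≤ 0`.
  refine le_of_tendsto (((hasDerivAt_iff_tendsto_slope.1 (hg t)).mono_left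
    (nhdsLT_le_nhdsNE t))) ?_
  filter_upwards [Ioo_mem_nhdsLT hst] with u hu
  rw [slope_def_field, ht, sub_zero]
  exact div_nonpos_of_nonneg_of_nonpos (hnonneg u ⟨hu.1.le, hu.2.le⟩) (by linarith [hu.2])

def IsODESolution (v : ℝ → ℝ → ℝ) (f : ℝ → ℝ) : Prop :=
  ∀ t, HasDerivAt f (v t (f t)) t

section ODE

variable {v : ℝ → ℝ → ℝ}

theorem eqOn_Ioo_of_hasDerivAt (hv : ∀ A B : ℝ, ∃ K : ℝ≥0, ∀ t ∈ Icc A B, LipschitzWith K (v t))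
    {A B t₀ : ℝ} (ht₀ : t₀ ∈ Ioo A B) {f g : ℝ → ℝ}
    (hf : ∀ t ∈ Ioo A B, HasDerivAt f (v t (f t)) t)
    (hg : ∀ t ∈ Ioo A B, HasDerivAt g (v t (g t)) t) (heq : f t₀ = g t₀) :
    EqOn f g (Ioo A B) := by
  obtain ⟨K, hK⟩ := hv A B
  exact ODE_solution_unique_of_mem_Ioo (s := fun _ => univ)
    (fun t ht => (hK t (Ioo_subset_Icc_self ht)).lipschitzOnWith) ht₀
    (fun t ht => ⟨hf t ht, mem_univ _⟩) (fun t ht => ⟨hg t ht, mem_univ _⟩) heq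

namespace IsODESolution

variable {f g : ℝ → ℝ}

theorem continuous (hf : IsODESolution v f) : Continuous f :=
  continuous_iff_continuousAt.2 fun t => (hf t).continuousAt

theorem contDiff_one (hf : IsODESolution v f) (hv : Continuous fun q : ℝ × ℝ => v q.1 q.2) :
    ContDiff ℝ 1 f := by
  refine contDiff_one_iff_deriv.2 ⟨fun t => (hf t).differentiableAt, ?_⟩
  rw [show deriv f = fun t => v t (f t) from funext fun t => (hf t).deriv]
  exact hv.comp (continuous_id.prodMk hf.continuous)

theorem lt_supersolution (hf : IsODESolution v f) {M M' : ℝ → ℝ}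
    (hM : ∀ t, HasDerivAt M (M' t) t) (hsuper : ∀ t, v t (M t) < M' t)
    {s t : ℝ} (hs : f s ≤ M s) (hst : s < t) : f t < M t :=
  sub_pos.1 <| pos_of_nonneg_of_deriv_pos_at_zeros (fun t => (hM t).sub (hf t))
    (fun t ht => sub_pos.2 <| sub_eq_zero.1 ht ▸ hsuper t) (sub_nonneg.2 hs) hst

theorem subsolution_lt (hf : IsODESolution v f) {m m' : ℝ → ℝ}
    (hm : ∀ t, HasDerivAt m (m' t) t) (hsub : ∀ t, m' t < v t (m t))
    {s t : ℝ} (hs : m s ≤ f s) (hst : s < t) : m t < f t :=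
  sub_pos.1 <| pos_of_nonneg_of_deriv_pos_at_zeros (fun t => (hf t).sub (hm t))
    (fun t ht => sub_pos.2 <| (sub_eq_zero.1 ht).symm ▸ hsub t) (sub_nonneg.2 hs) hst

theorem eq_of_eq (hv : ∀ A B : ℝ, ∃ K : ℝ≥0, ∀ t ∈ Icc A B, LipschitzWith K (v t))
    (hf : IsODESolution v f) (hg : IsODESolution v g) {t₀ : ℝ} (heq : f t₀ = g t₀) : f = g := by
  funext t
  have ht : t ∈ Ioo (min t t₀ - 1) (max t t₀ + 1) :=
    ⟨by linarith [min_le_left t t₀], by linarith [le_max_left t t₀]⟩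
  have ht₀ : t₀ ∈ Ioo (min t t₀ - 1) (max t t₀ + 1) :=
    ⟨by linarith [min_le_right t t₀], by linarith [le_max_right t t₀]⟩
  exact eqOn_Ioo_of_hasDerivAt hv ht₀ (fun u _ => hf u) (fun u _ => hg u) heq ht

theorem lt_of_lt (hv : ∀ A B : ℝ, ∃ K : ℝ≥0, ∀ t ∈ Icc A B, LipschitzWith K (v t))
    (hf : IsODESolution v f) (hg : IsODESolution v g) {t₀ : ℝ} (h : f t₀ < g t₀) (t : ℝ) :
    f t < g t := by
  by_contra! ht
  obtain ⟨t₁, -, ht₁⟩ : ∃ t₁ ∈ uIcc t₀ t, g t₁ - f t₁ = 0 :=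
    intermediate_value_uIcc (hg.continuous.sub hf.continuous).continuousOn
      (mem_uIcc.2 (Or.inr ⟨sub_nonpos.2 ht, (sub_pos.2 h).le⟩))
  exact h.ne (congrFun (hf.eq_of_eq hv hg (sub_eq_zero.1 ht₁).symm) t₀)

end IsODESolution

theorem exists_eq_forall_mem_Ioo_hasDerivAt (hvt : ∀ y, Continuous (v · y))
    (hv : ∀ A B : ℝ, ∃ K : ℝ≥0, ∀ t ∈ Icc A B, LipschitzWith K (v t))
    (hbdd : ∀ A B : ℝ, ∃ C, ∀ t ∈ Icc A B, ∀ y, |v t y| ≤ C)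
    {A B t₀ : ℝ} (ht₀ : t₀ ∈ Icc A B) (y₀ : ℝ) :
    ∃ f : ℝ → ℝ, f t₀ = y₀ ∧ ∀ t ∈ Ioo A B, HasDerivAt f (v t (f t)) t := by
  obtain ⟨K, hK⟩ := hv A B
  obtain ⟨C, hC⟩ := hbdd A B
  -- `v` is bounded on the whole strip, so the Picard–Lindelöf ball can be as large as needed.
  have hPL : IsPicardLindelof v (⟨t₀, ht₀⟩ : Icc A B) y₀
      (C.toNNReal * (B - A).toNNReal) 0 C.toNNReal K :=
    { lipschitzOnWith := fun t ht => (hK t ht).lipschitzOnWith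
      continuousOn := fun y _ => (hvt y).continuousOn
      norm_le := fun t ht y _ => (hC t ht y).trans (Real.le_coe_toNNReal C)
      mul_max_le := by
        simp only [NNReal.coe_mul, Real.coe_toNNReal', NNReal.coe_zero, sub_zero]
        refine mul_le_mul_of_nonneg_left (max_le ?_ ?_) (le_max_right C 0) <;>
          linarith [ht₀.1, ht₀.2, le_max_left (B - A) 0] }
  obtain ⟨f, hf₀, hf⟩ := hPL.exists_eq_forall_mem_Icc_hasDerivWithinAt₀
  exact ⟨f, hf₀, fun t ht => (hf t (Ioo_subset_Icc_self ht)).hasDerivAt (Icc_mem_nhds ht.1 ht.2)⟩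

theorem exists_isODESolution (hvt : ∀ y, Continuous (v · y))
    (hv : ∀ A B : ℝ, ∃ K : ℝ≥0, ∀ t ∈ Icc A B, LipschitzWith K (v t))
    (hbdd : ∀ A B : ℝ, ∃ C, ∀ t ∈ Icc A B, ∀ y, |v t y| ≤ C) (t₀ y₀ : ℝ) :
    ∃ f : ℝ → ℝ, f t₀ = y₀ ∧ IsODESolution v f := by
  have hloc (n : ℕ) : ∃ f : ℝ → ℝ, f t₀ = y₀ ∧
      ∀ t ∈ ball t₀ (n + 1), HasDerivAt f (v t (f t)) t := by
    rw [Real.ball_eq_Ioo]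
    refine exists_eq_forall_mem_Ioo_hasDerivAt hvt hv hbdd ⟨?_, ?_⟩ y₀ <;> linarith
  choose F hF₀ hF using hloc
  have hcons {j k : ℕ} (hjk : j ≤ k) : EqOn (F j) (F k) (ball t₀ (j + 1)) := by
    have hsub : ball t₀ (j + 1) ⊆ ball t₀ (k + 1) := ball_subset_ball (by gcongr)
    have ht₀ : t₀ ∈ ball t₀ (j + 1) := mem_ball_self (by positivity)
    simp only [Real.ball_eq_Ioo] at hF hsub ht₀ ⊢
    exact eqOn_Ioo_of_hasDerivAt hv ht₀ (hF j) (fun t ht => hF k t (hsub ht)) (by rw [hF₀, hF₀])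
  set N : ℝ → ℕ := fun t => ⌊dist t t₀⌋₊
  have hN (t : ℝ) : t ∈ ball t₀ (N t + 1) := mem_ball.2 (Nat.lt_floor_add_one _)
  refine ⟨fun t => F (N t) t, by simp [N, hF₀], fun t => ?_⟩
  refine (hF (N t) t (hN t)).congr_of_eventuallyEq ?_
  filter_upwards [isOpen_ball.mem_nhds (hN t)] with u hu
  exact hcons (Nat.lt_add_one_iff.1 ((Nat.floor_lt dist_nonneg).2 (by exact_mod_cast hu))) (hN u)

theorem exists_isODESolution_between (hvt : ∀ y, Continuous (v · y))
    (hv : ∀ A B : ℝ, ∃ K : ℝ≥0, ∀ t ∈ Icc A B, LipschitzWith K (v t))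
    (hbdd : ∀ A B : ℝ, ∃ C, ∀ t ∈ Icc A B, ∀ y, |v t y| ≤ C)
    {m m' M M' : ℝ → ℝ} (hm : ∀ t, HasDerivAt m (m' t) t) (hM : ∀ t, HasDerivAt M (M' t) t)
    (hsub : ∀ t, m' t < v t (m t)) (hsuper : ∀ t, v t (M t) < M' t) (hmM : ∀ t, m t < M t) :
    ∃ f : ℝ → ℝ, IsODESolution v f ∧ ∀ t, m t < f t ∧ f t < M t := by
  choose F hF₀ hF using fun n : ℕ => exists_isODESolution hvt hv hbdd (-n) (m (-n))
  choose H hH₀ hH using fun n : ℕ => exists_isODESolution hvt hv hbdd (-n) (M (-n))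
  have hmF (n : ℕ) {t : ℝ} (ht : -(n : ℝ) < t) : m t < F n t :=
    (hF n).subsolution_lt hm hsub (hF₀ n).ge ht
  have hHM (n : ℕ) {t : ℝ} (ht : -(n : ℝ) < t) : H n t < M t :=
    (hH n).lt_supersolution hM hsuper (hH₀ n).le ht
  have hF_mono : Monotone fun n => F n 0 := monotone_nat_of_le_succ fun n =>
    ((hF n).lt_of_lt hv (hF (n + 1)) (t₀ := -n)
      (hF₀ n ▸ hmF (n + 1) (by push_cast; linarith)) 0).le
  have hH_anti : Antitone fun n => H n 0 := antitone_nat_of_succ_le fun n =>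
    ((hH (n + 1)).lt_of_lt hv (hH n) (t₀ := -n)
      (hH₀ n ▸ hHM (n + 1) (by push_cast; linarith)) 0).le
  have hFH : (fun n => F n 0) ≤ fun n => H n 0 := fun n =>
    ((hF n).lt_of_lt hv (hH n) (t₀ := -n) (by rw [hF₀, hH₀]; exact hmM _) 0).le
  have hbounds := mem_iInter.1 (hF_mono.ciSup_mem_iInter_Icc_of_antitone hH_anti hFH)
  obtain ⟨f, hf₀, hf⟩ := exists_isODESolution hvt hv hbdd 0 (⨆ n, F n 0)
  refine ⟨f, hf, fun t => ?_⟩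
  obtain ⟨n, hn⟩ := exists_nat_gt (1 - t)
  have hn' : -(n : ℝ) < t - 1 := by linarith
  constructor
  · by_contra! h
    have hfm : f (t - 1) < m (t - 1) :=
      not_le.1 fun h' => h.not_gt (hf.subsolution_lt hm hsub h' (by linarith))
    have := hf.lt_of_lt hv (hF n) (hfm.trans (hmF n hn')) 0
    linarith [(hbounds n).1]
  · by_contra! h
    have hMf : M (t - 1) < f (t - 1) :=
      not_le.1 fun h' => h.not_gt (hf.lt_supersolution hM hsuper h' (by linarith))
    have := (hH n).lt_of_lt hv hf ((hHM n hn').trans hMf) 0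
    linarith [(hbounds n).2]

end ODE

noncomputable def truncatedField (a : ℝ → ℝ) (G : ℝ → ℝ → ℝ) (R t y : ℝ) : ℝ :=
  -G (max (-R) (min R y)) t / a t

section truncatedField

variable {a : ℝ → ℝ} {G : ℝ → ℝ → ℝ} {R : ℝ}

theorem truncatedField_of_abs_le {t y : ℝ} (hy : |y| ≤ R) :
    truncatedField a G R t y = -G y t / a t := by
  rw [truncatedField, min_eq_right (abs_le.1 hy).2, max_eq_right (abs_le.1 hy).1]

theorem abs_max_neg_min_le (hR : 0 ≤ R) (y : ℝ) : |max (-R) (min R y)| ≤ R :=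
  abs_le.2 ⟨le_max_left _ _, max_le (by linarith) (min_le_left _ _)⟩

theorem continuous_truncatedField (ha : Continuous a) (ha_pos : ∀ t, 0 < a t)
    (hG : Continuous fun q : ℝ × ℝ => G q.1 q.2) :
    Continuous fun q : ℝ × ℝ => truncatedField a G R q.1 q.2 := by
  refine Continuous.div ?_ (ha.comp continuous_fst) fun q => (ha_pos q.1).ne'
  exact (hG.comp ((continuous_const.max (continuous_const.min continuous_snd)).prodMk
    continuous_fst)).neg

theorem exists_abs_truncatedField_le (ha : Continuous a) (ha_pos : ∀ t, 0 < a t)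
    (hG : Continuous fun q : ℝ × ℝ => G q.1 q.2) (hR : 0 ≤ R) (A B : ℝ) :
    ∃ C, ∀ t ∈ Icc A B, ∀ y, |truncatedField a G R t y| ≤ C := by
  obtain ⟨C, hC⟩ := (isCompact_Icc.prod (isCompact_Icc (a := -R) (b := R)))
    |>.exists_bound_of_continuousOn (continuous_truncatedField ha ha_pos hG).continuousOn
  refine ⟨C, fun t ht y => ?_⟩
  have hy := abs_max_neg_min_le hR y
  rw [truncatedField, ← truncatedField_of_abs_le hy]
  exact hC (t, _) ⟨ht, abs_le.1 hy⟩

theorem exists_lipschitzWith_truncatedField (ha : Continuous a) (ha_pos : ∀ t, 0 < a t)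
    (hG : ∃ C, ∀ p q x, |p| ≤ R → |q| ≤ R → |G p x - G q x| ≤ C * |p - q|) (hR : 0 ≤ R)
    (A B : ℝ) : ∃ K : ℝ≥0, ∀ t ∈ Icc A B, LipschitzWith K (truncatedField a G R t) := by
  obtain ⟨C, hC⟩ := hG
  obtain ⟨ε, hε, haε⟩ :=
    isCompact_Icc.exists_forall_le' ha.continuousOn fun t (_ : t ∈ Icc A B) => ha_pos t
  set c : ℝ → ℝ := fun y => max (-R) (min R y)
  have hc : LipschitzWith 1 c := (LipschitzWith.id.const_min R).const_max (-R)
  refine ⟨(max C 0 / ε).toNNReal, fun t ht => LipschitzWith.of_dist_le' fun y z => ?_⟩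
  calc dist (truncatedField a G R t y) (truncatedField a G R t z)
      = |G (c z) t - G (c y) t| / a t := by
        rw [Real.dist_eq, truncatedField, truncatedField, div_sub_div_same, neg_sub_neg, abs_div,
          abs_of_pos (ha_pos t)]
    _ ≤ max C 0 * |c z - c y| / ε := by
        refine div_le_div₀ (by positivity) ?_ hε (haε t ht)
        exact (hC _ _ t (abs_max_neg_min_le hR z) (abs_max_neg_min_le hR y)).trans
          (mul_le_mul_of_nonneg_right (le_max_left C 0) (abs_nonneg _))
    _ ≤ max C 0 / ε * dist y z := by
        rw [mul_div_right_comm, dist_comm]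
        gcongr
        simpa [Real.dist_eq] using hc.dist_le_mul z y

end truncatedField

/-- Insertion of a global `C¹` solution of `a(x) f' + G(f, x) = 0` between a
bounded strict subsolution `m` and a bounded strict supersolution `M`. -/
theorem solution_between_sub_and_super
    (a : ℝ → ℝ) (G : ℝ → ℝ → ℝ) (m M : ℝ → ℝ)
    (ha_cont : Continuous a) (ha_pos : ∀ x, 0 < a x)
    (hG_cont : Continuous fun q : ℝ × ℝ => G q.1 q.2)
    (hG_lip : ∀ R > (0:ℝ), ∃ C : ℝ, ∀ p q x, |p| ≤ R → |q| ≤ R →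
      |G p x - G q x| ≤ C * |p - q|)
    (hm : ContDiff ℝ 1 m) (hM : ContDiff ℝ 1 M)
    (hm_bdd : ∃ C : ℝ, ∀ x, |m x| ≤ C) (hM_bdd : ∃ C : ℝ, ∀ x, |M x| ≤ C)
    (hmM : ∀ x, m x < M x)
    (hstrict : ∀ x, a x * deriv m x + G (m x) x < 0 ∧
      0 < a x * deriv M x + G (M x) x) :
    ∃ f : ℝ → ℝ, ContDiff ℝ 1 f ∧
      (∀ x, a x * deriv f x + G (f x) x = 0) ∧
      ∀ x, m x < f x ∧ f x < M x := by
  obtain ⟨Cm, hCm⟩ := hm_bdd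
  obtain ⟨CM, hCM⟩ := hM_bdd
  set R := max (max Cm CM) 1
  have hR : 0 < R := lt_max_of_lt_right one_pos
  have hmR (x : ℝ) : |m x| ≤ R := (hCm x).trans ((le_max_left _ _).trans (le_max_left _ _))
  have hMR (x : ℝ) : |M x| ≤ R := (hCM x).trans ((le_max_right _ _).trans (le_max_left _ _))
  have hv : Continuous fun q : ℝ × ℝ => truncatedField a G R q.1 q.2 :=
    continuous_truncatedField ha_cont ha_pos hG_cont
  obtain ⟨f, hf, hmfM⟩ := exists_isODESolution_between (v := truncatedField a G R)
    (fun y => hv.comp (continuous_id.prodMk continuous_const))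
    (exists_lipschitzWith_truncatedField ha_cont ha_pos (hG_lip R hR) hR.le)
    (exists_abs_truncatedField_le ha_cont ha_pos hG_cont hR.le)
    (fun x => (hm.differentiable one_ne_zero x).hasDerivAt)
    (fun x => (hM.differentiable one_ne_zero x).hasDerivAt)
    (fun x => by
      rw [truncatedField_of_abs_le (hmR x), lt_div_iff₀ (ha_pos x)]; linarith [(hstrict x).1])
    (fun x => by
      rw [truncatedField_of_abs_le (hMR x), div_lt_iff₀ (ha_pos x)]; linarith [(hstrict x).2])
    hmM
  refine ⟨f, hf.contDiff_one hv, fun x => ?_, hmfM⟩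
  have hfR : |f x| ≤ R := abs_le.2 ⟨by linarith [(abs_le.1 (hmR x)).1, (hmfM x).1],
    by linarith [(abs_le.1 (hMR x)).2, (hmfM x).2]⟩
  rw [(hf x).deriv, truncatedField_of_abs_le hfR]
  field_simp [(ha_pos x).ne']
  ring
end

section
/- Let u : ℝ → ℝ be a continuous viscosity solution of a(x)u'' + H(x,u') = λ on an open bounded interval I where inf_I a > 0, a is Lipschitz, and H is continuous. If u is Lipschitz on I, then u ∈ C²(I) and the equation holds pointwise on I. -/
/-!
A Lipschitz bound on `u` bounds the slope of every `C²` function touching `u`, so along touching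
test functions `H` stays bounded and the equation gives `|u''| ≤ M` in the viscosity sense. By
comparison with quadratics, `u + M x² / 2` is convex and `u - M x² / 2` is concave, so `u` is
differentiable with an `M`-Lipschitz derivative. The equation then reads
`u'' = f := (λ - H(x, u')) / a` in the viscosity sense with `f` continuous; subtracting a `C²`
function `w` with `w'' = f` leaves a function that is both convex and concave, hence affine, so
`u = w + affine` is `C²` and solves the equation pointwise.
-/

/-- `u` is a viscosity solution of `a u'' + H(x,u') = λ` on the open set `I`:
super- and subsolution test inequalities at every point of `I`. -/
def IsViscositySolutionOn (a : ℝ → ℝ) (H : ℝ → ℝ → ℝ) (lam : ℝ) (u : ℝ → ℝ)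
    (I : Set ℝ) : Prop :=
  ContinuousOn u I ∧
    ∀ (φ : ℝ → ℝ) (x₀ : ℝ), x₀ ∈ I → ContDiff ℝ 2 φ →
      (IsLocalMin (fun x => u x - φ x) x₀ →
        a x₀ * deriv (deriv φ) x₀ + H x₀ (deriv φ x₀) ≤ lam) ∧
      (IsLocalMax (fun x => u x - φ x) x₀ →
        lam ≤ a x₀ * deriv (deriv φ) x₀ + H x₀ (deriv φ x₀))

open Set Filter Topology

theorem le_div_of_mul_le_of_le {a ε R t : ℝ} (hε : 0 < ε) (ha : ε ≤ a) (hR : 0 ≤ R)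
    (h : a * t ≤ R) : t ≤ R / ε := by
  rw [le_div_iff₀ hε]
  rcases le_total t 0 with ht | ht <;> nlinarith

theorem hasDerivAt_quadratic (p q r t : ℝ) :
    HasDerivAt (fun t => p + q * t + r * t ^ 2) (q + 2 * r * t) t :=
  (((hasDerivAt_id' t).const_mul q).const_add p |>.add ((hasDerivAt_pow 2 t).const_mul r))
    |>.congr_deriv (by norm_num; ring)

theorem contDiff_quadratic (p q r : ℝ) : ContDiff ℝ 2 fun t => p + q * t + r * t ^ 2 := by
  fun_prop

theorem deriv_deriv_quadratic (p q r t : ℝ) :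
    deriv (deriv fun t => p + q * t + r * t ^ 2) t = 2 * r := by
  rw [funext fun t => (hasDerivAt_quadratic p q r t).deriv]
  convert ((hasDerivAt_id' t).const_mul (2 * r)).const_add q |>.deriv using 1
  ring

theorem deriv_deriv_add {f g : ℝ → ℝ} (hf : ContDiff ℝ 2 f) (hg : ContDiff ℝ 2 g) (x : ℝ) :
    deriv (deriv fun y => f y + g y) x = deriv (deriv f) x + deriv (deriv g) x := by
  have h := iteratedDeriv_add (n := 2) (x := x) hf.contDiffAt hg.contDiffAt
  rwa [iteratedDeriv_succ, iteratedDeriv_one, iteratedDeriv_succ, iteratedDeriv_one,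
    iteratedDeriv_succ, iteratedDeriv_one] at h

theorem deriv_deriv_neg (f : ℝ → ℝ) (x : ℝ) :
    deriv (deriv fun y => -f y) x = -deriv (deriv f) x := by
  have h : deriv (fun y => -f y) = -deriv f := deriv.neg'
  rw [h, deriv.neg]

theorem exists_contDiff_two_deriv_deriv_eq {F : ℝ → ℝ} (hF : Continuous F) :
    ∃ w : ℝ → ℝ, ContDiff ℝ 2 w ∧ ∀ x, deriv (deriv w) x = F x := by
  set W : ℝ → ℝ := fun t => ∫ s in (0 : ℝ)..t, F s
  have hW : deriv W = F := funext (Continuous.deriv_integral F hF 0)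
  have hW_diff : Differentiable ℝ W := fun t =>
    (hF.integral_hasStrictDerivAt 0 t).hasDerivAt.differentiableAt
  set w : ℝ → ℝ := fun t => ∫ s in (0 : ℝ)..t, W s
  have hw : deriv w = W := funext (Continuous.deriv_integral W hW_diff.continuous 0)
  refine ⟨w, ?_, fun x => by rw [hw, hW]⟩
  rw [show (2 : WithTop ℕ∞) = 1 + 1 from rfl, contDiff_succ_iff_deriv, hw, contDiff_one_iff_deriv,
    hW]
  exact ⟨fun t => (hW_diff.continuous.integral_hasStrictDerivAt 0 t).hasDerivAt.differentiableAt,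
    by simp, hW_diff, hF⟩

theorem exists_isLocalMax_mem_Ioo {f : ℝ → ℝ} {a b y : ℝ} (hf : ContinuousOn f (Icc a b))
    (hy : y ∈ Ioo a b) (ha : f a < f y) (hb : f b < f y) : ∃ c ∈ Ioo a b, IsLocalMax f c := by
  obtain ⟨c, hc, hmax⟩ := isCompact_Icc.exists_isMaxOn ⟨y, Ioo_subset_Icc_self hy⟩ hf
  have hyc : f y ≤ f c := hmax (Ioo_subset_Icc_self hy)
  have hc' : c ∈ Ioo a b :=
    ⟨hc.1.lt_of_ne (by rintro rfl; linarith), hc.2.lt_of_ne (by rintro rfl; linarith)⟩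
  exact ⟨c, hc', hmax.isLocalMax (Icc_mem_nhds hc'.1 hc'.2)⟩

theorem abs_le_of_hasDerivAt_of_eventually_ge {g : ℝ → ℝ} {g' K x : ℝ}
    (hg : HasDerivAt g g' x) (h : ∀ᶠ y in 𝓝 x, -(K * |y - x|) ≤ g y - g x) : |g'| ≤ K := by
  obtain ⟨hleft, hright⟩ := hasDerivAt_iff_tendsto_slope_left_right.1 hg
  refine abs_le.2 ⟨ge_of_tendsto hright ?_, le_of_tendsto hleft ?_⟩
  · filter_upwards [h.filter_mono nhdsWithin_le_nhds, self_mem_nhdsWithin]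
      with y hy (hxy : x < y)
    rw [slope_def_field, le_div_iff₀ (sub_pos.2 hxy)]
    rw [abs_of_pos (sub_pos.2 hxy)] at hy
    linarith
  · filter_upwards [h.filter_mono nhdsWithin_le_nhds, self_mem_nhdsWithin]
      with y hy (hxy : y < x)
    rw [slope_def_field, div_le_iff_of_neg (sub_neg.2 hxy)]
    rw [abs_of_neg (sub_neg.2 hxy)] at hy
    linarith

theorem abs_le_of_isLocalExtr_sub {u φ : ℝ → ℝ} {p K x : ℝ}
    (hu : ∀ᶠ y in 𝓝 x, |u y - u x| ≤ K * |y - x|) (hφ : HasDerivAt φ p x)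
    (hext : IsLocalExtr (fun y => u y - φ y) x) : |p| ≤ K := by
  rcases hext with hmin | hmax
  · rw [← abs_neg]
    refine abs_le_of_hasDerivAt_of_eventually_ge hφ.neg ?_
    filter_upwards [hu, hmin] with y hy hy'
    simp only [Pi.neg_apply]
    linarith [(abs_le.1 hy).2]
  · refine abs_le_of_hasDerivAt_of_eventually_ge hφ ?_
    filter_upwards [hu, hmax] with y hy hy'
    linarith [(abs_le.1 hy).1]

/-- At an interior point the one-sided derivatives of a convex function satisfy `f'₋ ≤ f'₊`;
if `f + g` is differentiable, the gaps of `f` and `g` add up to zero, so both vanish. -/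
theorem ConvexOn.differentiableAt_of_add {s : Set ℝ} {f g : ℝ → ℝ} {x : ℝ}
    (hf : ConvexOn ℝ s f) (hg : ConvexOn ℝ s g) (hx : x ∈ interior s)
    (hfg : DifferentiableAt ℝ (fun y => f y + g y) x) : DifferentiableAt ℝ f x := by
  have hlf := hf.hasDerivWithinAt_leftDeriv_of_mem_interior hx
  have hrf := hf.hasDerivWithinAt_rightDeriv_of_mem_interior hx
  have hlg := hg.hasDerivWithinAt_leftDeriv_of_mem_interior hx
  have hrg := hg.hasDerivWithinAt_rightDeriv_of_mem_interior hx
  have hl := (uniqueDiffWithinAt_Iio x).eq_deriv _ (hlf.add hlg)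
    hfg.hasDerivAt.hasDerivWithinAt
  have hr := (uniqueDiffWithinAt_Ioi x).eq_deriv _ (hrf.add hrg)
    hfg.hasDerivAt.hasDerivWithinAt
  have hf' := hf.leftDeriv_le_rightDeriv_of_mem_interior hx
  have hg' := hg.leftDeriv_le_rightDeriv_of_mem_interior hx
  rw [show derivWithin f (Iio x) x = derivWithin f (Ioi x) x by linarith] at hlf
  exact (hasDerivAt_iff_tendsto_slope_left_right.2
    ⟨(hasDerivWithinAt_iff_tendsto_slope' self_notMem_Iio).1 hlf,
      (hasDerivWithinAt_iff_tendsto_slope' self_notMem_Ioi).1 hrf⟩).differentiableAt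

section Semiconvex

variable {s : Set ℝ} {u : ℝ → ℝ} {c : ℝ}

theorem differentiableAt_of_convexOn_add_sq_of_concaveOn_sub_sq {x : ℝ}
    (h₁ : ConvexOn ℝ s fun x => u x + c / 2 * x ^ 2)
    (h₂ : ConcaveOn ℝ s fun x => u x - c / 2 * x ^ 2) (hx : x ∈ interior s) :
    DifferentiableAt ℝ u x := by
  have hsum_eq : (fun y => (u y + c / 2 * y ^ 2) + -(u y - c / 2 * y ^ 2)) = fun y => c * y ^ 2 :=
    funext fun y => by ring
  have hsum : DifferentiableAt ℝ (fun y => (u y + c / 2 * y ^ 2) + -(u y - c / 2 * y ^ 2)) x := by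
    rw [hsum_eq]
    fun_prop
  simpa only [add_sub_cancel_right] using (h₁.differentiableAt_of_add h₂.neg hx hsum).fun_sub
    (by fun_prop : DifferentiableAt ℝ (fun y => c / 2 * y ^ 2) x)

theorem lipschitzOnWith_deriv_of_convexOn_add_sq_of_concaveOn_sub_sq (hs : IsOpen s)
    (h₁ : ConvexOn ℝ s fun x => u x + c / 2 * x ^ 2)
    (h₂ : ConcaveOn ℝ s fun x => u x - c / 2 * x ^ 2) :
    LipschitzOnWith c.toNNReal (deriv u) s := by
  have hu : ∀ x ∈ s, DifferentiableAt ℝ u x := fun x hx =>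
    differentiableAt_of_convexOn_add_sq_of_concaveOn_sub_sq h₁ h₂ (by rwa [hs.interior_eq])
  have hmono := h₁.monotoneOn_deriv fun x hx => (hu x hx).add (by fun_prop)
  have hanti := h₂.antitoneOn_deriv fun x hx => (hu x hx).sub (by fun_prop)
  have hd₁ : ∀ x ∈ s, deriv (fun x => u x + c / 2 * x ^ 2) x = deriv u x + c * x := by
    intro x hx
    exact ((hu x hx).hasDerivAt.add ((hasDerivAt_pow 2 x).const_mul (c / 2))).deriv.trans
      (by norm_num; ring)
  have hd₂ : ∀ x ∈ s, deriv (fun x => u x - c / 2 * x ^ 2) x = deriv u x - c * x := by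
    intro x hx
    exact ((hu x hx).hasDerivAt.sub ((hasDerivAt_pow 2 x).const_mul (c / 2))).deriv.trans
      (by norm_num; ring)
  refine LipschitzOnWith.of_le_add_mul' c fun x hx y hy => ?_
  rw [Real.dist_eq]
  rcases le_total x y with hxy | hyx
  · have := hmono hx hy hxy
    rw [hd₁ x hx, hd₁ y hy] at this
    rw [abs_of_nonpos (sub_nonpos.2 hxy)]
    linarith
  · have := hanti hy hx hyx
    rw [hd₂ x hx, hd₂ y hy] at this
    rw [abs_of_nonneg (sub_nonneg.2 hyx)]
    linarith

end Semiconvex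

theorem ConvexOn.exists_eqOn_affine_of_concaveOn {𝕜 : Type*} [Field 𝕜] [LinearOrder 𝕜]
    [IsStrictOrderedRing 𝕜] {s : Set 𝕜} {f : 𝕜 → 𝕜} {a : 𝕜} (hf : ConvexOn 𝕜 s f)
    (hf' : ConcaveOn 𝕜 s f) (ha : a ∈ s) : ∃ m, EqOn f (fun y => f a + m * (y - a)) s := by
  by_cases hs : ∃ b ∈ s, b ≠ a
  · obtain ⟨b, hb, hba⟩ := hs
    refine ⟨slope f a b, fun y hy => ?_⟩
    rcases eq_or_ne y a with rfl | hya
    · simp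
    have hslope : slope f a y = slope f a b := by
      rcases le_total y b with hyb | hby
      · exact le_antisymm (hf.slope_mono ha ⟨hy, hya⟩ ⟨hb, hba⟩ hyb)
          (hf'.slope_anti ha ⟨hy, hya⟩ ⟨hb, hba⟩ hyb)
      · exact le_antisymm (hf'.slope_anti ha ⟨hb, hba⟩ ⟨hy, hya⟩ hby)
          (hf.slope_mono ha ⟨hb, hba⟩ ⟨hy, hya⟩ hby)
    rw [← hslope, slope_def_field]
    field_simp [sub_ne_zero.2 hya]
    ring
  · push Not at hs
    exact ⟨0, fun y hy => by simp [hs y hy]⟩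

/-- `F ≤ v''` on `s` in the viscosity sense. -/
def ViscositySecondDerivGE (v F : ℝ → ℝ) (s : Set ℝ) : Prop :=
  ∀ φ : ℝ → ℝ, ContDiff ℝ 2 φ → ∀ x ∈ s, IsLocalMax (fun y => v y - φ y) x →
    F x ≤ deriv (deriv φ) x

/-- `v'' ≤ F` on `s` in the viscosity sense. -/
def ViscositySecondDerivLE (v F : ℝ → ℝ) (s : Set ℝ) : Prop :=
  ∀ φ : ℝ → ℝ, ContDiff ℝ 2 φ → ∀ x ∈ s, IsLocalMin (fun y => v y - φ y) x →
    deriv (deriv φ) x ≤ F x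

section Viscosity

variable {v w F G : ℝ → ℝ} {s t : Set ℝ}

namespace ViscositySecondDerivGE

theorem mono (h : ViscositySecondDerivGE v F s) (hts : t ⊆ s) (hGF : ∀ x ∈ t, G x ≤ F x) :
    ViscositySecondDerivGE v G t :=
  fun φ hφ x hx hmax => (hGF x hx).trans (h φ hφ x (hts hx) hmax)

theorem sub_contDiff (h : ViscositySecondDerivGE v F s) (hw : ContDiff ℝ 2 w) :
    ViscositySecondDerivGE (fun x => v x - w x) (fun x => F x - deriv (deriv w) x) s := by
  intro φ hφ x hx hmax
  have h' := h (fun y => w y + φ y) (hw.add hφ) x hx (by simpa only [sub_sub] using hmax)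
  rw [deriv_deriv_add hw hφ] at h'
  linarith

/-- If `v` rose above a chord, subtracting a slightly concave quadratic through the chord's ends
would leave an interior local maximum, where the test function has `φ'' < 0`. -/
theorem convexOn (hs : Convex ℝ s) (hv : ContinuousOn v s)
    (h : ViscositySecondDerivGE v (fun _ => 0) s) : ConvexOn ℝ s v := by
  refine convexOn_iff_slope_mono_adjacent.2 ⟨hs, fun x y z hx hz hxy hyz => ?_⟩
  by_contra! hlt
  have hzx : 0 < z - x := by linarith
  set m := (v z - v x) / (z - x)
  have hm : m * (z - x) = v z - v x := div_mul_cancel₀ _ hzx.ne'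
  set gap := v y - (v x + m * (y - x)) with hgap_def
  have hgap : 0 < gap := by
    have hprod : gap * (z - x) = (v y - v x) * (z - y) - (v z - v y) * (y - x) := by
      simp only [gap, m]; field_simp; ring
    rw [div_lt_div_iff₀ (by linarith) (by linarith)] at hlt
    exact pos_of_mul_pos_left (by linarith) hzx.le
  set δ := gap / (2 * ((y - x) * (z - y)))
  have hδ : 0 < δ := div_pos hgap (by nlinarith)
  have hδmul : δ * ((y - x) * (z - y)) = gap / 2 := by
    simp only [δ]; field_simp
  set φ : ℝ → ℝ := fun t => (v x - m * x - δ * x * z) + (m + δ * (x + z)) * t + (-δ) * t ^ 2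
  have hφ : ∀ t, φ t = v x + m * (t - x) - δ * ((t - x) * (t - z)) := fun t => by ring
  have hy : v y - φ y = gap / 2 := by rw [hφ]; linear_combination -hgap_def - hδmul
  have hIcc : Icc x z ⊆ s := hs.ordConnected.out hx hz
  obtain ⟨t₀, ht₀, hmax⟩ := exists_isLocalMax_mem_Ioo (f := fun t => v t - φ t)
    ((hv.mono hIcc).sub (contDiff_quadratic _ _ _).continuous.continuousOn) ⟨hxy, hyz⟩
    (show v x - φ x < v y - φ y by rw [hy, hφ]; simp; linarith)
    (show v z - φ z < v y - φ y by rw [hy, hφ, hm, sub_self, mul_zero]; linarith)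
  have := h φ (contDiff_quadratic _ _ _) t₀ (hIcc (Ioo_subset_Icc_self ht₀)) hmax
  rw [deriv_deriv_quadratic] at this
  linarith

theorem convexOn_add_sq {c : ℝ} (hs : Convex ℝ s) (hv : ContinuousOn v s)
    (h : ViscositySecondDerivGE v (fun _ => -c) s) :
    ConvexOn ℝ s fun x => v x + c / 2 * x ^ 2 := by
  have hq : ContDiff ℝ 2 fun x : ℝ => -(c / 2) * x ^ 2 := by fun_prop
  have h' := (h.sub_contDiff hq).mono subset_rfl fun x _ => (by simp : (0 : ℝ) ≤ -c - _)
  exact (h'.convexOn hs (hv.sub hq.continuous.continuousOn)).congr fun x _ => by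
    show v x - -(c / 2) * x ^ 2 = _; ring

end ViscositySecondDerivGE

namespace ViscositySecondDerivLE

theorem mono (h : ViscositySecondDerivLE v F s) (hts : t ⊆ s) (hFG : ∀ x ∈ t, F x ≤ G x) :
    ViscositySecondDerivLE v G t :=
  fun φ hφ x hx hmin => (h φ hφ x (hts hx) hmin).trans (hFG x hx)

theorem sub_contDiff (h : ViscositySecondDerivLE v F s) (hw : ContDiff ℝ 2 w) :
    ViscositySecondDerivLE (fun x => v x - w x) (fun x => F x - deriv (deriv w) x) s := by
  intro φ hφ x hx hmin
  have h' := h (fun y => w y + φ y) (hw.add hφ) x hx (by simpa only [sub_sub] using hmin)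
  rw [deriv_deriv_add hw hφ] at h'
  linarith

theorem neg (h : ViscositySecondDerivLE v F s) :
    ViscositySecondDerivGE (fun x => -v x) (fun x => -F x) s := by
  intro φ hφ x hx hmax
  have h' := h (fun y => -φ y) hφ.neg x hx
    (by simpa only [neg_sub, sub_neg_eq_add, add_comm] using hmax.neg)
  rw [deriv_deriv_neg] at h'
  linarith

theorem concaveOn (hs : Convex ℝ s) (hv : ContinuousOn v s)
    (h : ViscositySecondDerivLE v (fun _ => 0) s) : ConcaveOn ℝ s v :=
  neg_convexOn_iff.1 <| (h.neg.mono subset_rfl fun _ _ => neg_zero.ge).convexOn hs hv.neg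

theorem concaveOn_sub_sq {c : ℝ} (hs : Convex ℝ s) (hv : ContinuousOn v s)
    (h : ViscositySecondDerivLE v (fun _ => c) s) :
    ConcaveOn ℝ s fun x => v x - c / 2 * x ^ 2 := by
  have hq : ContDiff ℝ 2 fun x : ℝ => c / 2 * x ^ 2 := by fun_prop
  have h' := (h.sub_contDiff hq).mono subset_rfl fun x _ => (by simp : c - _ ≤ (0 : ℝ))
  exact h'.concaveOn hs (hv.sub hq.continuous.continuousOn)

end ViscositySecondDerivLE

namespace ViscositySecondDerivGE

theorem exists_contDiff_eventuallyEq (h₁ : ViscositySecondDerivGE v F s)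
    (h₂ : ViscositySecondDerivLE v F s) (hv : ContinuousOn v s) (hF : ContinuousOn F s) {x : ℝ}
    (hx : s ∈ 𝓝 x) : ∃ g : ℝ → ℝ, ContDiff ℝ 2 g ∧ v =ᶠ[𝓝 x] g ∧ deriv (deriv g) x = F x := by
  obtain ⟨α, β, hxαβ, hnhds, hsub⟩ := exists_Icc_mem_subset_of_mem_nhds hx
  have hαβ : α ≤ β := hxαβ.1.trans hxαβ.2
  obtain ⟨w, hw, hw''⟩ := exists_contDiff_two_deriv_deriv_eq
    (F := fun t => F (projIcc α β hαβ t)) <| (hF.mono hsub).comp_continuous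
      (continuous_subtype_val.comp continuous_projIcc) fun t => (projIcc α β hαβ t).2
  replace hw'' : ∀ t ∈ Icc α β, deriv (deriv w) t = F t := fun t ht => by
    rw [hw'', projIcc_of_mem hαβ ht]
  have hvw : ContinuousOn (fun t => v t - w t) (Icc α β) :=
    (hv.mono hsub).sub hw.continuous.continuousOn
  have hconv : ConvexOn ℝ (Icc α β) fun t => v t - w t :=
    ((h₁.sub_contDiff hw).mono hsub fun t ht => by simp [hw'' t ht]).convexOn
      (convex_Icc α β) hvw
  have hconc : ConcaveOn ℝ (Icc α β) fun t => v t - w t :=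
    ((h₂.sub_contDiff hw).mono hsub fun t ht => by simp [hw'' t ht]).concaveOn
      (convex_Icc α β) hvw
  obtain ⟨m, hm⟩ := hconv.exists_eqOn_affine_of_concaveOn hconc hxαβ
  have haff : ContDiff ℝ 2 fun t => (v x - w x) + m * (t - x) := by fun_prop
  refine ⟨fun t => w t + ((v x - w x) + m * (t - x)), hw.add haff, ?_, ?_⟩
  · filter_upwards [hnhds] with t ht
    linarith [hm ht]
  · rw [deriv_deriv_add hw haff, hw'' x hxαβ]
    simp

theorem contDiffOn_two_and_deriv_deriv_eq (h₁ : ViscositySecondDerivGE v F s)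
    (h₂ : ViscositySecondDerivLE v F s) (hs : IsOpen s) (hv : ContinuousOn v s)
    (hF : ContinuousOn F s) : ContDiffOn ℝ 2 v s ∧ ∀ x ∈ s, deriv (deriv v) x = F x := by
  refine ⟨fun x hx => ?_, fun x hx => ?_⟩ <;>
    obtain ⟨g, hg, hvg, hg''⟩ := h₁.exists_contDiff_eventuallyEq h₂ hv hF (hs.mem_nhds hx)
  · exact (hg.contDiffAt.congr_of_eventuallyEq hvg).contDiffWithinAt
  · rw [hvg.deriv.deriv_eq, hg'']

end ViscositySecondDerivGE

namespace IsViscositySolutionOn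

variable {a : ℝ → ℝ} {H : ℝ → ℝ → ℝ} {lam : ℝ} {u : ℝ → ℝ}

theorem viscositySecondDeriv_bounds {K C ε : ℝ} (hvisc : IsViscositySolutionOn a H lam u s)
    (hs : IsOpen s) (hε : 0 < ε) (ha : ∀ x ∈ s, ε ≤ a x)
    (hu : ∀ x ∈ s, ∀ y ∈ s, |u x - u y| ≤ K * |x - y|)
    (hH : ∀ x ∈ s, ∀ p, |p| ≤ K → |H x p| ≤ C) :
    ViscositySecondDerivGE u (fun _ => -((|lam| + C) / ε)) s ∧
      ViscositySecondDerivLE u (fun _ => (|lam| + C) / ε) s := by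
  have hH_touch : ∀ φ, ContDiff ℝ 2 φ → ∀ x ∈ s, IsLocalExtr (fun y => u y - φ y) x →
      |H x (deriv φ x)| ≤ C := fun φ hφ x hx hext =>
    hH x hx _ <| abs_le_of_isLocalExtr_sub
      (by filter_upwards [hs.mem_nhds hx] with y hy using hu y hy x hx)
      ((hφ.differentiable (by norm_num)) x).hasDerivAt hext
  have hR : ∀ φ, ContDiff ℝ 2 φ → ∀ x ∈ s, IsLocalExtr (fun y => u y - φ y) x →
      0 ≤ |lam| + C := fun φ hφ x hx hext =>
    add_nonneg (abs_nonneg lam) ((abs_nonneg _).trans (hH_touch φ hφ x hx hext))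
  constructor
  · intro φ hφ x hx hmax
    have hsub := (hvisc.2 φ x hx hφ).2 hmax
    have hHx := abs_le.1 (hH_touch φ hφ x hx (Or.inr hmax))
    have := le_div_of_mul_le_of_le (t := -deriv (deriv φ) x) hε (ha x hx)
      (hR φ hφ x hx (Or.inr hmax)) (by linarith [neg_abs_le lam])
    linarith
  · intro φ hφ x hx hmin
    have hsuper := (hvisc.2 φ x hx hφ).1 hmin
    have hHx := abs_le.1 (hH_touch φ hφ x hx (Or.inl hmin))
    exact le_div_of_mul_le_of_le hε (ha x hx) (hR φ hφ x hx (Or.inl hmin))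
      (by linarith [le_abs_self lam])

theorem viscositySecondDeriv_eq (hvisc : IsViscositySolutionOn a H lam u s)
    (ha : ∀ x ∈ s, 0 < a x) (hu : ∀ x ∈ s, DifferentiableAt ℝ u x) :
    ViscositySecondDerivGE u (fun x => (lam - H x (deriv u x)) / a x) s ∧
      ViscositySecondDerivLE u (fun x => (lam - H x (deriv u x)) / a x) s := by
  have hslope : ∀ φ, ContDiff ℝ 2 φ → ∀ x ∈ s, IsLocalExtr (fun y => u y - φ y) x →
      deriv φ x = deriv u x := fun φ hφ x hx hext => by
    have := hext.hasDerivAt_eq_zero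
      ((hu x hx).hasDerivAt.sub ((hφ.differentiable (by norm_num)) x).hasDerivAt)
    linarith
  constructor
  · intro φ hφ x hx hmax
    have hsub := (hvisc.2 φ x hx hφ).2 hmax
    rw [hslope φ hφ x hx (Or.inr hmax)] at hsub
    rw [div_le_iff₀ (ha x hx)]
    linarith [mul_comm (a x) (deriv (deriv φ) x)]
  · intro φ hφ x hx hmin
    have hsuper := (hvisc.2 φ x hx hφ).1 hmin
    rw [hslope φ hφ x hx (Or.inl hmin)] at hsuper
    rw [le_div_iff₀ (ha x hx)]
    linarith [mul_comm (a x) (deriv (deriv φ) x)]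

end IsViscositySolutionOn

end Viscosity

theorem viscosity_solution_regularity_general
    (a : ℝ → ℝ) (H : ℝ → ℝ → ℝ) (u : ℝ → ℝ) (lam A B : ℝ)
    (ha_lip : ∃ L : ℝ, ∀ x y, |a x - a y| ≤ L * |x - y|)
    (ha_pos : ∃ ε > (0:ℝ), ∀ x ∈ Set.Ioo A B, ε ≤ a x)
    (hH_cont : Continuous fun q : ℝ × ℝ => H q.1 q.2)
    (hu_lip : ∃ K : ℝ, ∀ x ∈ Set.Ioo A B, ∀ y ∈ Set.Ioo A B,
      |u x - u y| ≤ K * |x - y|)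
    (hu_visc : IsViscositySolutionOn a H lam u (Set.Ioo A B)) :
    ContDiffOn ℝ 2 u (Set.Ioo A B) ∧
      ∀ x ∈ Set.Ioo A B,
        a x * deriv (deriv u) x + H x (deriv u x) = lam := by
  obtain ⟨L, hL⟩ := ha_lip
  obtain ⟨ε, hε, ha⟩ := ha_pos
  obtain ⟨K, hK⟩ := hu_lip
  obtain ⟨C, hC⟩ := (isCompact_Icc.prod isCompact_Icc).exists_bound_of_continuousOn
    (s := Icc A B ×ˢ Icc (-K) K) hH_cont.continuousOn
  have hH : ∀ x ∈ Ioo A B, ∀ p, |p| ≤ K → |H x p| ≤ C := fun x hx p hp =>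
    hC (x, p) ⟨Ioo_subset_Icc_self hx, abs_le.1 hp⟩
  have hcont := hu_visc.1
  obtain ⟨hGE, hLE⟩ := hu_visc.viscositySecondDeriv_bounds isOpen_Ioo hε ha hK hH
  have h₁ := hGE.convexOn_add_sq (convex_Ioo A B) hcont
  have h₂ := hLE.concaveOn_sub_sq (convex_Ioo A B) hcont
  have hdiff : ∀ x ∈ Ioo A B, DifferentiableAt ℝ u x := fun x hx =>
    differentiableAt_of_convexOn_add_sq_of_concaveOn_sub_sq h₁ h₂ (by rwa [interior_Ioo])
  have hu' :=
    (lipschitzOnWith_deriv_of_convexOn_add_sq_of_concaveOn_sub_sq isOpen_Ioo h₁ h₂).continuousOn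
  have ha_cont : Continuous a := LipschitzWith.continuous (K := L.toNNReal) <|
    .of_dist_le' fun x y => by simpa only [Real.dist_eq] using hL x y
  have hapos : ∀ x ∈ Ioo A B, 0 < a x := fun x hx => hε.trans_le (ha x hx)
  have hf : ContinuousOn (fun x => (lam - H x (deriv u x)) / a x) (Ioo A B) :=
    (continuousOn_const.sub (hH_cont.comp_continuousOn (continuousOn_id.prodMk hu'))).div
      ha_cont.continuousOn fun x hx => (hapos x hx).ne'
  obtain ⟨hGE', hLE'⟩ := hu_visc.viscositySecondDeriv_eq hapos hdiff
  obtain ⟨hC2, hu''⟩ := hGE'.contDiffOn_two_and_deriv_deriv_eq hLE' isOpen_Ioo hcont hf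
  refine ⟨hC2, fun x hx => ?_⟩
  rw [hu'' x hx, mul_div_cancel₀ _ (hapos x hx).ne']
  ring

/-- Elliptic regularity: a Lipschitz viscosity solution of
`a u'' + H(x,u') = λ` on a bounded open interval where `a` is Lipschitz and
bounded away from zero is `C²` there, and the equation holds pointwise. -/
theorem viscosity_solution_regularity
    (a : ℝ → ℝ) (H : ℝ → ℝ → ℝ) (u : ℝ → ℝ) (lam A B : ℝ) (hAB : A < B)
    (ha_lip : ∃ L : ℝ, ∀ x y, |a x - a y| ≤ L * |x - y|)
    (ha01 : ∀ x, 0 ≤ a x ∧ a x ≤ 1)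
    (ha_pos : ∃ ε > (0:ℝ), ∀ x ∈ Set.Ioo A B, ε ≤ a x)
    (hH_cont : Continuous fun q : ℝ × ℝ => H q.1 q.2)
    (hu_cont : Continuous u)
    (hu_lip : ∃ K : ℝ, ∀ x ∈ Set.Ioo A B, ∀ y ∈ Set.Ioo A B,
      |u x - u y| ≤ K * |x - y|)
    (hu_visc : IsViscositySolutionOn a H lam u (Set.Ioo A B)) :
    ContDiffOn ℝ 2 u (Set.Ioo A B) ∧
      ∀ x ∈ Set.Ioo A B,
        a x * deriv (deriv u) x + H x (deriv u x) = lam :=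
  viscosity_solution_regularity_general a H u lam A B ha_lip ha_pos hH_cont hu_lip hu_visc
end

section
/- Let f : ℝ × Ω → ℝ be a stationary process with C¹ paths, let λ > m₀ := ess-inf of G, and suppose a(x,ω)∂_x f(x,ω) + G(f(x,ω),x,ω) < λ for all x, a.s. Assume G satisfies α(|p|) ≤ G(p,x,ω) ≤ β(|p|) with α coercive. Then almost surely f(x,ω) ∈ (p⁻_λ, p⁺_λ) for all x ∈ ℝ, where p⁻_λ := inf_x inf{p : G(p,x,ω) ≤ λ} and p⁺_λ := sup_x sup{p : G(p,x,ω) ≤ λ} (a.s. constants by ergodicity). -/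
/-!
By Poincaré recurrence, almost every path `x ↦ f x ω` comes back arbitrarily close to its value
at every rational point, both as `x → ∞` and as `x → -∞`. For such a path every value `f x ω` is
dominated by a value `f z ω` with `∂ₓf(z) ≥ 0`: either `x` is a global maximum, or some rational
`q` with `f q > f x` recurs at a `t > x`, and the maximum of `f` on `[x, t]` is attained at
some `z ∈ (x, t]`, where the left difference quotients are nonnegative. There `a ≥ 0` turns the subsolution inequality into
`G(f z, z) < λ`, so by continuity `f z` lies strictly below the supremum of the sublevel set,
and coercivity bounds all sublevel sets uniformly. The lower bound is the same argument applied
to the reflected path `x ↦ -f (-x)`.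
-/

open MeasureTheory Filter Set Topology

namespace MeasureTheory

theorem Conservative.ae_mapClusterPt_iterate {Ω X : Type*} [MeasurableSpace Ω] {μ : Measure Ω}
    [TopologicalSpace X] [SecondCountableTopology X] [MeasurableSpace X] [OpensMeasurableSpace X]
    {T : Ω → Ω} (hT : Conservative T μ) {h : Ω → X} (hh : Measurable h) :
    ∀ᵐ ω ∂μ, MapClusterPt (h ω) atTop fun n => h (T^[n] ω) := by
  have : ∀ s ∈ TopologicalSpace.countableBasis X, ∀ᵐ ω ∂μ,
      h ω ∈ s → ∃ᶠ n in atTop, h (T^[n] ω) ∈ s := fun s hs =>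
    hT.ae_mem_imp_frequently_image_mem
      (hh (TopologicalSpace.isOpen_of_mem_countableBasis hs).measurableSet).nullMeasurableSet
  refine ((ae_ball_iff <| TopologicalSpace.countable_countableBasis X).2 this).mono
    fun ω hω => mapClusterPt_iff_frequently.2 fun s hs => ?_
  rcases (TopologicalSpace.isBasis_countableBasis X).mem_nhds_iff.1 hs with ⟨o, hoS, hxo, hos⟩
  exact (hω o hoS hxo).mono fun n hn => hos hn

end MeasureTheory

theorem iterate_eq_of_map_add {Ω : Type*} {τ : ℝ → Ω → Ω} (hτ0 : τ 0 = id)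
    (hτadd : ∀ x y : ℝ, τ (x + y) = τ x ∘ τ y) (s : ℝ) (n : ℕ) :
    (τ s)^[n] = τ (n * s) := by
  induction n with
  | zero => simp [hτ0]
  | succ n ih => rw [Function.iterate_succ', ih, ← hτadd]; push_cast; ring_nf

theorem ae_mapClusterPt_of_stationary {Ω : Type*} [MeasurableSpace Ω] {μ : Measure Ω}
    [IsFiniteMeasure μ] {τ : ℝ → Ω → Ω} (hτ0 : τ 0 = id)
    (hτadd : ∀ x y : ℝ, τ (x + y) = τ x ∘ τ y) {f : ℝ → Ω → ℝ}
    (hf_stat : ∀ x y : ℝ, ∀ ω, f (x + y) ω = f x (τ y ω)) {s x₀ : ℝ}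
    (hs : MeasurePreserving (τ s) μ μ) (hf : Measurable (f x₀)) {l : Filter ℝ}
    (hl : Tendsto (fun n : ℕ => x₀ + n * s) atTop l) :
    ∀ᵐ ω ∂μ, MapClusterPt (f x₀ ω) l fun t => f t ω := by
  filter_upwards [hs.conservative.ae_mapClusterPt_iterate hf] with ω hω
  refine .of_comp hl ?_
  simpa [Function.comp_def, hf_stat, iterate_eq_of_map_add hτ0 hτadd] using hω

theorem deriv_nonneg_of_isMaxOn_Icc {g : ℝ → ℝ} {a b z : ℝ} (h : IsMaxOn g (Icc a b) z)
    (haz : a < z) (hzb : z ≤ b) : 0 ≤ deriv g z := by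
  by_cases hd : DifferentiableAt ℝ g z
  swap
  · rw [deriv_zero_of_not_differentiableAt hd]
  have hslope := (hasDerivWithinAt_iff_tendsto_slope' (self_notMem_Iio (a := z))).1
    (hd.hasDerivAt.hasDerivWithinAt (s := Iio z))
  refine ge_of_tendsto hslope ?_
  filter_upwards [Ioo_mem_nhdsLT haz] with t ht
  rw [slope_def_field]
  exact div_nonneg_of_nonpos (sub_nonpos.2 (h ⟨ht.1.le, ht.2.le.trans hzb⟩))
    (sub_nonpos.2 ht.2.le)

theorem exists_le_apply_deriv_nonneg {g : ℝ → ℝ} (hg : Continuous g)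
    (hrec : ∀ q : ℚ, MapClusterPt (g q) atTop g) (x : ℝ) :
    ∃ z, g x ≤ g z ∧ 0 ≤ deriv g z := by
  by_cases hmax : ∀ y, g y ≤ g x
  · exact ⟨x, le_rfl, ((isMaxOn_univ_iff.2 hmax).isLocalMax univ_mem).deriv_eq_zero.ge⟩
  push Not at hmax
  obtain ⟨q, hq⟩ : ∃ q : ℚ, g x < g q :=
    Rat.denseRange_cast.exists_mem_open (isOpen_lt continuous_const hg) hmax
  obtain ⟨t, hxt, ht⟩ : ∃ t, x < t ∧ g x < g t :=
    ((eventually_gt_atTop x).and_frequently ((hrec q).frequently (Ioi_mem_nhds hq))).exists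
  obtain ⟨z, hz, hzmax⟩ := isCompact_Icc.exists_isMaxOn (nonempty_Icc.2 hxt.le) hg.continuousOn
  have hgz : g x < g z := ht.trans_le (hzmax ⟨hxt.le, le_rfl⟩)
  have hxz : x < z := hz.1.lt_of_ne (by rintro rfl; exact hgz.false)
  exact ⟨z, hgz.le, deriv_nonneg_of_isMaxOn_Icc hzmax hxz hz.2⟩

theorem exists_apply_le_deriv_nonneg {g : ℝ → ℝ} (hg : Continuous g)
    (hrec : ∀ q : ℚ, MapClusterPt (g q) atBot g) (x : ℝ) :
    ∃ z, g z ≤ g x ∧ 0 ≤ deriv g z := by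
  have hrec' : ∀ q : ℚ, MapClusterPt (-g (-q)) atTop fun y => -g (-y) := fun q =>
    .of_comp tendsto_neg_atBot_atTop <| by
      simpa [Function.comp_def] using
        (hrec (-q)).continuousAt_comp continuous_neg.continuousAt
  obtain ⟨z, hz, hdz⟩ := exists_le_apply_deriv_nonneg (g := fun y => -g (-y))
    (hg.comp continuous_neg).neg hrec' (-x)
  refine ⟨-z, by simpa using hz, ?_⟩
  rwa [deriv.fun_neg, deriv_comp_neg (f := g), neg_neg] at hdz

theorem exists_abs_le_of_le_of_tendsto_atTop {ι : Type*} {α : ℝ → ℝ} {φ : ι → ℝ → ℝ}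
    (hα : Tendsto α atTop atTop) (hφ : ∀ i p, α |p| ≤ φ i p) (c : ℝ) :
    ∃ R, ∀ i p, φ i p ≤ c → |p| ≤ R := by
  obtain ⟨R, hR⟩ := (hα.eventually_gt_atTop c).exists_forall_of_atTop
  refine ⟨R, fun i p hp => le_of_not_gt fun hpR => ?_⟩
  linarith [hR |p| hpR.le, hφ i p]

section Sublevel

variable {ι : Type*} {φ : ι → ℝ → ℝ} {c R : ℝ}

theorem lt_ciSup_csSup_sublevel (hR : ∀ i p, φ i p ≤ c → |p| ≤ R) {i : ι} {p : ℝ}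
    (hφ : ContinuousAt (φ i) p) (hp : φ i p < c) :
    p < ⨆ j, sSup {q | φ j q ≤ c} := by
  have hR0 : 0 ≤ R := (abs_nonneg p).trans (hR i p hp.le)
  obtain ⟨q, hq, hpq⟩ := ((hφ.eventually (gt_mem_nhds hp)).filter_mono nhdsWithin_le_nhds
    |>.and (self_mem_nhdsWithin : Ioi p ∈ 𝓝[>] p)).exists
  have hbdd : BddAbove (range fun j => sSup {q | φ j q ≤ c}) :=
    ⟨R, forall_mem_range.2 fun j => Real.sSup_le (fun q hq => (abs_le.1 (hR j q hq)).2) hR0⟩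
  calc p < q := hpq
    _ ≤ sSup {q | φ i q ≤ c} := le_csSup ⟨R, fun q hq => (abs_le.1 (hR i q hq)).2⟩ hq.le
    _ ≤ ⨆ j, sSup {q | φ j q ≤ c} := le_ciSup hbdd i

theorem ciInf_csInf_sublevel_lt (hR : ∀ i p, φ i p ≤ c → |p| ≤ R) {i : ι} {p : ℝ}
    (hφ : ContinuousAt (φ i) p) (hp : φ i p < c) :
    ⨅ j, sInf {q | φ j q ≤ c} < p := by
  have hR0 : 0 ≤ R := (abs_nonneg p).trans (hR i p hp.le)
  obtain ⟨q, hq, hqp⟩ := ((hφ.eventually (gt_mem_nhds hp)).filter_mono nhdsWithin_le_nhds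
    |>.and (self_mem_nhdsWithin : Iio p ∈ 𝓝[<] p)).exists
  have hbdd : BddBelow (range fun j => sInf {q | φ j q ≤ c}) :=
    ⟨-R, forall_mem_range.2 fun j =>
      Real.le_sInf (fun q hq => (abs_le.1 (hR j q hq)).1) (by linarith)⟩
  calc ⨅ j, sInf {q | φ j q ≤ c} ≤ sInf {q | φ i q ≤ c} := ciInf_le hbdd i
    _ ≤ q := csInf_le ⟨-R, fun q hq => (abs_le.1 (hR i q hq)).1⟩ hq.le
    _ < p := hqp

end Sublevel

theorem stationary_subsolution_bounds_general
    {Ω : Type*} [MeasurableSpace Ω] (μ : Measure Ω) [IsProbabilityMeasure μ]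
    (τ : ℝ → Ω → Ω)
    (hmp : ∀ x : ℝ, MeasurePreserving (τ x) μ μ)
    (hτ0 : ∀ ω, τ 0 ω = ω)
    (hτadd : ∀ x y : ℝ, ∀ ω, τ (x + y) ω = τ x (τ y ω))
    (a : ℝ → Ω → ℝ) (G : ℝ → ℝ → Ω → ℝ) (f : ℝ → Ω → ℝ)
    (lam : ℝ) (α β : ℝ → ℝ)
    (ha01 : ∀ x ω, 0 ≤ a x ω ∧ a x ω ≤ 1)
    (hG_cont : ∀ ω, Continuous fun q : ℝ × ℝ => G q.1 q.2 ω)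
    (hα_coercive : Filter.Tendsto α Filter.atTop Filter.atTop)
    (hG_bounds : ∀ p x ω, α |p| ≤ G p x ω ∧ G p x ω ≤ β |p|)
    (hf_meas : Measurable fun q : ℝ × Ω => f q.1 q.2)
    (hf_stat : ∀ x y : ℝ, ∀ ω, f (x + y) ω = f x (τ y ω))
    (hf_C1 : ∀ ω, ContDiff ℝ 1 (fun x => f x ω))
    (hf_sub : ∀ᵐ ω ∂μ, ∀ x : ℝ,
      a x ω * deriv (fun y => f y ω) x + G (f x ω) x ω < lam) :
    ∀ᵐ ω ∂μ, ∀ x : ℝ,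
      (⨅ y : ℝ, sInf {p : ℝ | G p y ω ≤ lam}) < f x ω ∧
        f x ω < ⨆ y : ℝ, sSup {p : ℝ | G p y ω ≤ lam} := by
  have hrec : ∀ x₀ : ℝ, ∀ {s : ℝ} {l : Filter ℝ}, Tendsto (fun n : ℕ => x₀ + n * s) atTop l →
      ∀ᵐ ω ∂μ, MapClusterPt (f x₀ ω) l fun t => f t ω := fun x₀ _ _ =>
    ae_mapClusterPt_of_stationary (funext hτ0) (fun x y => funext (hτadd x y)) hf_stat (hmp _)
      (hf_meas.comp (measurable_const.prodMk measurable_id))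
  have hrec_top : ∀ᵐ ω ∂μ, ∀ q : ℚ, MapClusterPt (f q ω) atTop fun t => f t ω :=
    ae_all_iff.2 fun q => hrec q (s := 1) <|
      tendsto_atTop_add_const_left _ _ (by simpa using tendsto_natCast_atTop_atTop)
  have hrec_bot : ∀ᵐ ω ∂μ, ∀ q : ℚ, MapClusterPt (f q ω) atBot fun t => f t ω :=
    ae_all_iff.2 fun q => hrec q (s := -1) <| tendsto_atBot_add_const_left _ _
      (tendsto_natCast_atTop_atTop.atTop_mul_const_of_neg (by norm_num))
  filter_upwards [hf_sub, hrec_top, hrec_bot] with ω hsub htop hbot x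
  obtain ⟨R, hR⟩ := exists_abs_le_of_le_of_tendsto_atTop (φ := fun y p => G p y ω) hα_coercive
    (fun y p => (hG_bounds p y ω).1) lam
  have hGz : ∀ z, 0 ≤ deriv (fun y => f y ω) z → G (f z ω) z ω < lam := fun z hz => by
    linarith [hsub z, mul_nonneg (ha01 z ω).1 hz]
  have hGcont : ∀ z p, ContinuousAt (fun p => G p z ω) p := fun z p =>
    ((hG_cont ω).comp (continuous_id.prodMk continuous_const)).continuousAt
  have hpath := (hf_C1 ω).continuous
  obtain ⟨z₁, hz₁, hd₁⟩ := exists_apply_le_deriv_nonneg hpath hbot x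
  obtain ⟨z₂, hz₂, hd₂⟩ := exists_le_apply_deriv_nonneg hpath htop x
  exact ⟨(ciInf_csInf_sublevel_lt hR (hGcont z₁ _) (hGz z₁ hd₁)).trans_le hz₁,
    hz₂.trans_lt (lt_ciSup_csSup_sublevel hR (hGcont z₂ _) (hGz z₂ hd₂))⟩

/-- Bounds for stationary strict subsolutions: in an ergodic stationary setting,
if `f` is stationary with `C¹` paths and satisfies
`a(x,ω) f' + G(f, x, ω) < λ` for all `x`, a.s., with `λ > m₀` and `G` coercive
(`α(|p|) ≤ G(p,x,ω) ≤ β(|p|)` with `α` coercive), then almost surely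
`f(x,ω) ∈ (p⁻_λ, p⁺_λ)` for all `x`, where
`p⁻_λ = inf_x inf {p : G(p,x,ω) ≤ λ}` and `p⁺_λ = sup_x sup {p : G(p,x,ω) ≤ λ}`. -/
theorem stationary_subsolution_bounds
    {Ω : Type*} [MeasurableSpace Ω] (μ : Measure Ω) [IsProbabilityMeasure μ]
    (τ : ℝ → Ω → Ω)
    (hmp : ∀ x : ℝ, MeasurePreserving (τ x) μ μ)
    (hτ0 : ∀ ω, τ 0 ω = ω)
    (hτadd : ∀ x y : ℝ, ∀ ω, τ (x + y) ω = τ x (τ y ω))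
    (hτmeas : Measurable fun p : ℝ × Ω => τ p.1 p.2)
    (herg : ∀ φ : Ω → ℝ, Measurable φ →
      (∀ x : ℝ, ∀ᵐ ω ∂μ, φ (τ x ω) = φ ω) → ∃ c : ℝ, ∀ᵐ ω ∂μ, φ ω = c)
    (a : ℝ → Ω → ℝ) (G : ℝ → ℝ → Ω → ℝ) (f : ℝ → Ω → ℝ)
    (m₀ lam : ℝ) (α β : ℝ → ℝ)
    (ha01 : ∀ x ω, 0 ≤ a x ω ∧ a x ω ≤ 1)
    (ha_stat : ∀ x y : ℝ, ∀ ω, a (x + y) ω = a x (τ y ω))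
    (hG_stat : ∀ p x y : ℝ, ∀ ω, G p (x + y) ω = G p x (τ y ω))
    (hG_cont : ∀ ω, Continuous fun q : ℝ × ℝ => G q.1 q.2 ω)
    (hG_lb : ∀ p x ω, m₀ ≤ G p x ω)
    (hα_coercive : Filter.Tendsto α Filter.atTop Filter.atTop)
    (hβ_coercive : Filter.Tendsto β Filter.atTop Filter.atTop)
    (hG_bounds : ∀ p x ω, α |p| ≤ G p x ω ∧ G p x ω ≤ β |p|)
    (hlam : m₀ < lam)
    (hf_meas : Measurable fun q : ℝ × Ω => f q.1 q.2)
    (hf_stat : ∀ x y : ℝ, ∀ ω, f (x + y) ω = f x (τ y ω))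
    (hf_C1 : ∀ ω, ContDiff ℝ 1 (fun x => f x ω))
    (hf_sub : ∀ᵐ ω ∂μ, ∀ x : ℝ,
      a x ω * deriv (fun y => f y ω) x + G (f x ω) x ω < lam) :
    ∀ᵐ ω ∂μ, ∀ x : ℝ,
      (⨅ y : ℝ, sInf {p : ℝ | G p y ω ≤ lam}) < f x ω ∧
        f x ω < ⨆ y : ℝ, sSup {p : ℝ | G p y ω ≤ lam} :=
  stationary_subsolution_bounds_general μ τ hmp hτ0 hτadd a G f lam α β ha01 hG_cont hα_coercive
    hG_bounds hf_meas hf_stat hf_C1 hf_sub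
end
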